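/- arXiv:2110.10091 — 2 statements merged into one kernel-verified Lean document; each statement's English description precedes it below -/
import Mathlib

section
/- Let n be a positive integer, f : {0,1}^n → {−1,0,1} a function, and A = {x ∈ {0,1}^n : f(x) ≠ 0}. Then for every δ ∈ [0,1], ∑_{s ∈ {0,1}^n} δ^{|s|} · f̂(s)² ≤ (|A|/2^n)^{2/(1+δ)}, where f̂(s) = 2^{−n} ∑_{x ∈ {0,1}^n} f(x)(−1)^{s·x}. -/
open scoped Classical

noncomputable section

/-- The sign `(-1)^{z·x}` where `z·x = ∑ i, z i * x i` over `{0,1}^n`. -/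
def chi {n : ℕ} (z x : Fin n → Bool) : ℝ :=
  (-1 : ℝ) ^ (Finset.univ.filter (fun i => z i = true ∧ x i = true)).card

/-- Hamming weight of `z ∈ {0,1}^n`. -/
def hw {n : ℕ} (z : Fin n → Bool) : ℕ :=
  (Finset.univ.filter (fun i => z i = true)).card

open Real


-- convexity surrogate: x^p + y^p ≥ 2 when x+y=2, x,y>0, -1 ≤ p ≤ 0
lemma aux_two_le {x y p : ℝ} (hx : 0 < x) (hy : 0 < y) (hxy : x + y = 2)
    (hp0 : p ≤ 0) : (2:ℝ) ≤ x ^ p + y ^ p := by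
  have hxy1 : x * y ≤ 1 := by nlinarith [sq_nonneg (x - y)]
  have h1 : (1:ℝ) ≤ (x * y) ^ p :=
    Real.one_le_rpow_of_pos_of_le_one_of_nonpos (by positivity) hxy1 hp0
  have h2 : (x * y) ^ p = x ^ p * y ^ p := Real.mul_rpow hx.le hy.le
  have hxp : 0 < x ^ p := Real.rpow_pos_of_pos hx p
  have hyp : 0 < y ^ p := Real.rpow_pos_of_pos hy p
  nlinarith [sq_nonneg (x ^ p - y ^ p), sq_nonneg (x ^ p + y ^ p - 2)]

lemma aux_hasDeriv1 {r t : ℝ} (ht0 : 0 < t) (ht1 : t < 1) :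
    HasDerivAt (fun t : ℝ => (1 + t) ^ r - (1 - t) ^ r - 2 * r * t)
      (r * (1 + t) ^ (r - 1) + r * (1 - t) ^ (r - 1) - 2 * r) t := by
  have h1 : HasDerivAt (fun t : ℝ => (1 + t) ^ r) (1 * r * (1 + t) ^ (r - 1)) t :=
    (HasDerivAt.rpow_const ((hasDerivAt_id t).const_add 1) (Or.inl (by intro h; linarith)))
  have h2 : HasDerivAt (fun t : ℝ => (1 - t) ^ r) ((-1) * r * (1 - t) ^ (r - 1)) t :=
    (HasDerivAt.rpow_const ((hasDerivAt_id t).const_sub 1) (Or.inl (by intro h; linarith)))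
  have h3 : HasDerivAt (fun t : ℝ => 2 * r * t) (2 * r) t := by
    simpa using (hasDerivAt_id t).const_mul (2 * r)
  have h4 : HasDerivAt (fun t : ℝ => (1 + t) ^ r - (1 - t) ^ r - 2 * r * t) _ t :=
    (h1.sub h2).sub h3
  convert h4 using 1
  ring

lemma aux_cont {r : ℝ} (hr : 0 ≤ r) :
    ContinuousOn (fun t : ℝ => (1 + t) ^ r - (1 - t) ^ r - 2 * r * t) (Set.Icc 0 1) := by
  apply ContinuousOn.sub
  · apply ContinuousOn.sub
    · exact (continuous_const.add continuous_id).continuousOn.rpow_const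
        (fun x _ => Or.inr hr)
    · exact (continuous_const.sub continuous_id).continuousOn.rpow_const
        (fun x _ => Or.inr hr)
  · exact (continuous_const.mul continuous_id).continuousOn

lemma aux_step1 {r : ℝ} (hr0 : 0 ≤ r) (hr1 : r ≤ 1) {t : ℝ} (ht0 : 0 ≤ t) (ht1 : t ≤ 1) :
    2 * r * t ≤ (1 + t) ^ r - (1 - t) ^ r := by
  set F : ℝ → ℝ := fun t => (1 + t) ^ r - (1 - t) ^ r - 2 * r * t with hF
  have hmono : MonotoneOn F (Set.Icc 0 1) := by
    apply monotoneOn_of_deriv_nonneg (convex_Icc 0 1) (aux_cont hr0)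
    · intro x hx
      rw [interior_Icc] at hx
      exact (aux_hasDeriv1 hx.1 hx.2).differentiableAt.differentiableWithinAt
    · intro x hx
      rw [interior_Icc] at hx
      obtain ⟨hx1, hx2⟩ := hx
      rw [(aux_hasDeriv1 hx1 hx2).deriv]
      have h2 : (2:ℝ) ≤ (1 + x) ^ (r - 1) + (1 - x) ^ (r - 1) :=
        aux_two_le (by linarith) (by linarith) (by ring) (by linarith)
      nlinarith
  have h0 : F 0 = 0 := by simp [hF]
  have := hmono (Set.mem_Icc.2 ⟨le_refl 0, zero_le_one⟩) (Set.mem_Icc.2 ⟨ht0, ht1⟩) ht0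
  rw [h0] at this
  simpa [hF] using this

lemma aux_hasDeriv2 {q t : ℝ} (ht0 : 0 < t) (ht1 : t < 1) :
    HasDerivAt (fun t : ℝ => (1 + t) ^ q + (1 - t) ^ q - 2 - q * (q - 1) * t ^ 2)
      (q * ((1 + t) ^ (q - 1) - (1 - t) ^ (q - 1) - 2 * (q - 1) * t)) t := by
  have h1 : HasDerivAt (fun t : ℝ => (1 + t) ^ q) (1 * q * (1 + t) ^ (q - 1)) t :=
    (HasDerivAt.rpow_const ((hasDerivAt_id t).const_add 1) (Or.inl (by intro h; linarith)))
  have h2 : HasDerivAt (fun t : ℝ => (1 - t) ^ q) ((-1) * q * (1 - t) ^ (q - 1)) t :=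
    (HasDerivAt.rpow_const ((hasDerivAt_id t).const_sub 1) (Or.inl (by intro h; linarith)))
  have h3 : HasDerivAt (fun t : ℝ => q * (q - 1) * t ^ 2 + 2) (q * (q - 1) * (2 * t)) t := by
    simpa using (((hasDerivAt_pow 2 t)).const_mul (q * (q - 1))).add_const 2
  have this : HasDerivAt (fun x : ℝ => (1 + x) ^ q + (1 - x) ^ q - (q * (q - 1) * x ^ 2 + 2))
    _ t := (h1.add h2).sub h3
  have heq : (fun x : ℝ => (1 + x) ^ q + (1 - x) ^ q - (q * (q - 1) * x ^ 2 + 2))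
      = (fun t : ℝ => (1 + t) ^ q + (1 - t) ^ q - 2 - q * (q - 1) * t ^ 2) := by
    funext u; ring
  rw [heq] at this
  convert this using 1
  ring

lemma aux_step2 {q : ℝ} (hq1 : 1 ≤ q) (hq2 : q ≤ 2) {t : ℝ} (ht0 : 0 ≤ t) (ht1 : t ≤ 1) :
    2 + q * (q - 1) * t ^ 2 ≤ (1 + t) ^ q + (1 - t) ^ q := by
  set G : ℝ → ℝ := fun t => (1 + t) ^ q + (1 - t) ^ q - 2 - q * (q - 1) * t ^ 2 with hG
  have hmono : MonotoneOn G (Set.Icc 0 1) := by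
    apply monotoneOn_of_deriv_nonneg (convex_Icc 0 1)
    · apply ContinuousOn.sub
      apply ContinuousOn.sub
      · apply ContinuousOn.add
        · exact (continuous_const.add continuous_id).continuousOn.rpow_const
            (fun x _ => Or.inr (by linarith))
        · exact (continuous_const.sub continuous_id).continuousOn.rpow_const
            (fun x _ => Or.inr (by linarith))
      · exact continuousOn_const
      · exact (continuous_const.mul (continuous_pow 2)).continuousOn
    · intro x hx
      rw [interior_Icc] at hx
      exact (aux_hasDeriv2 hx.1 hx.2).differentiableAt.differentiableWithinAt
    · intro x hx
      rw [interior_Icc] at hx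
      obtain ⟨hx1, hx2⟩ := hx
      rw [(aux_hasDeriv2 hx1 hx2).deriv]
      have := aux_step1 (r := q - 1) (by linarith) (by linarith) hx1.le hx2.le
      have hq0 : (0:ℝ) ≤ q := by linarith
      nlinarith
  have h0 : G 0 = 0 := by norm_num [hG]
  have := hmono (Set.mem_Icc.2 ⟨le_refl 0, zero_le_one⟩) (Set.mem_Icc.2 ⟨ht0, ht1⟩) ht0
  rw [h0] at this
  simp only [hG] at this
  linarith

-- normalized two-point inequality
lemma aux_tp_norm {q : ℝ} (hq1 : 1 ≤ q) (hq2 : q ≤ 2) {t : ℝ} (ht0 : 0 ≤ t) (ht1 : t ≤ 1) :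
    (1 + (q - 1) * t ^ 2) ^ (q / 2) ≤ ((1 + t) ^ q + (1 - t) ^ q) / 2 := by
  have h1 : (1 + (q - 1) * t ^ 2) ^ (q / 2) ≤ 1 + (q / 2) * ((q - 1) * t ^ 2) := by
    apply rpow_one_add_le_one_add_mul_self
    · nlinarith
    · linarith
    · linarith
  have h2 := aux_step2 hq1 hq2 ht0 ht1
  linarith

-- core: 0 ≤ v ≤ u
lemma aux_tp_core {q : ℝ} (hq1 : 1 ≤ q) (hq2 : q ≤ 2) {u v : ℝ} (hv : 0 ≤ v) (hvu : v ≤ u) :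
    (u ^ 2 + (q - 1) * v ^ 2) ^ (q / 2) ≤ ((u + v) ^ q + (u - v) ^ q) / 2 := by
  have hq0 : (0:ℝ) < q := by linarith
  rcases eq_or_lt_of_le (hv.trans hvu) with hu | hu
  · -- u = 0, hence v = 0
    have hv0 : v = 0 := le_antisymm (hvu.trans hu.symm.le) hv
    rw [← hu, hv0]
    rw [show (0:ℝ) ^ 2 + (q - 1) * (0:ℝ) ^ 2 = 0 by ring, show (0:ℝ) + 0 = 0 by ring,
      show (0:ℝ) - 0 = 0 by ring, Real.zero_rpow hq0.ne',
      Real.zero_rpow (show q / 2 ≠ 0 by positivity)]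
    norm_num
  · set t : ℝ := v / u with htdef
    have ht0 : 0 ≤ t := by positivity
    have ht1 : t ≤ 1 := by rw [div_le_one hu]; exact hvu
    have hv' : v = u * t := by rw [htdef]; field_simp
    have hnorm := aux_tp_norm hq1 hq2 ht0 ht1
    have huq : (0:ℝ) < u ^ q := Real.rpow_pos_of_pos hu q
    have hmul := mul_le_mul_of_nonneg_left hnorm huq.le
    calc (u ^ 2 + (q - 1) * v ^ 2) ^ (q / 2)
        = (u ^ 2 * (1 + (q - 1) * t ^ 2)) ^ (q / 2) := by rw [hv']; ring_nf
      _ = (u ^ 2 : ℝ) ^ (q / 2) * (1 + (q - 1) * t ^ 2) ^ (q / 2) := by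
          apply Real.mul_rpow (by positivity) (by nlinarith)
      _ = u ^ q * (1 + (q - 1) * t ^ 2) ^ (q / 2) := by
          have h2q : ((u ^ 2 : ℝ)) ^ (q / 2) = u ^ q := by
            rw [← Real.rpow_natCast u 2, ← Real.rpow_mul hu.le]
            congr 1
            push_cast
            ring
          rw [h2q]
      _ ≤ u ^ q * (((1 + t) ^ q + (1 - t) ^ q) / 2) := hmul
      _ = ((u * (1 + t)) ^ q + (u * (1 - t)) ^ q) / 2 := by
          rw [Real.mul_rpow hu.le (by linarith), Real.mul_rpow hu.le (by linarith)]
          ring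
      _ = ((u + v) ^ q + (u - v) ^ q) / 2 := by rw [hv']; ring_nf

lemma aux_tp_nonneg {q : ℝ} (hq1 : 1 ≤ q) (hq2 : q ≤ 2) {u v : ℝ} (hu : 0 ≤ u) (hv : 0 ≤ v) :
    (u ^ 2 + (q - 1) * v ^ 2) ^ (q / 2) ≤ ((u + v) ^ q + |u - v| ^ q) / 2 := by
  rcases le_total v u with h | h
  · rw [abs_of_nonneg (by linarith)]
    exact aux_tp_core hq1 hq2 hv h
  · rw [abs_of_nonpos (by linarith : u - v ≤ 0), neg_sub]
    have := aux_tp_core hq1 hq2 hu h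
    have h2 : u ^ 2 ≤ v ^ 2 := by nlinarith
    have hle : u ^ 2 + (q - 1) * v ^ 2 ≤ v ^ 2 + (q - 1) * u ^ 2 := by
      nlinarith [mul_nonneg (show (0:ℝ) ≤ 2 - q by linarith)
        (show (0:ℝ) ≤ v ^ 2 - u ^ 2 by linarith)]
    calc (u ^ 2 + (q - 1) * v ^ 2) ^ (q / 2)
        ≤ (v ^ 2 + (q - 1) * u ^ 2) ^ (q / 2) :=
          Real.rpow_le_rpow (by nlinarith) hle (by positivity)
      _ ≤ ((v + u) ^ q + (v - u) ^ q) / 2 := this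
      _ = ((u + v) ^ q + (v - u) ^ q) / 2 := by rw [add_comm v u]

/-- The two-point (Bonami) inequality. -/
lemma aux_two_point {q : ℝ} (hq1 : 1 ≤ q) (hq2 : q ≤ 2) (a b : ℝ) :
    (a ^ 2 + (q - 1) * b ^ 2) ^ (q / 2) ≤ (|a + b| ^ q + |a - b| ^ q) / 2 := by
  have h := aux_tp_nonneg hq1 hq2 (abs_nonneg a) (abs_nonneg b)
  rw [sq_abs, sq_abs] at h
  have hsum : (|a| + |b|) ^ q + |(|a| - |b|)| ^ q = |a + b| ^ q + |a - b| ^ q := by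
    rcases le_total 0 a with ha | ha <;> rcases le_total 0 b with hb | hb
    · have e1 : |a| + |b| = |a + b| := by
        rw [abs_of_nonneg ha, abs_of_nonneg hb, abs_of_nonneg (by linarith)]
      have e2 : |(|a| - |b|)| = |a - b| := by rw [abs_of_nonneg ha, abs_of_nonneg hb]
      rw [e1, e2]
    · have e1 : |a| + |b| = |a - b| := by
        rw [abs_of_nonneg ha, abs_of_nonpos hb, abs_of_nonneg (by linarith : (0:ℝ) ≤ a - b)]
        ring
      have e2 : |(|a| - |b|)| = |a + b| := by
        rw [abs_of_nonneg ha, abs_of_nonpos hb]; congr 1; ring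
      rw [e1, e2, add_comm]
    · have e1 : |a| + |b| = |a - b| := by
        rw [abs_of_nonpos ha, abs_of_nonneg hb, abs_of_nonpos (by linarith : a - b ≤ 0)]
        ring
      have e2 : |(|a| - |b|)| = |a + b| := by
        rw [abs_of_nonpos ha, abs_of_nonneg hb, ← abs_neg]; congr 1; ring
      rw [e1, e2, add_comm]
    · have e1 : |a| + |b| = |a + b| := by
        rw [abs_of_nonpos ha, abs_of_nonpos hb, abs_of_nonpos (by linarith : a + b ≤ 0)]
        ring
      have e2 : |(|a| - |b|)| = |a - b| := by
        rw [abs_of_nonpos ha, abs_of_nonpos hb, show -a - -b = b - a by ring, abs_sub_comm]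
      rw [e1, e2]
  rw [hsum] at h
  exact h

/-- Weighted reverse Minkowski inequality for `0 < p ≤ 1`. -/
lemma aux_rev_mink {ι : Type*} [Fintype ι] {w : ℝ} (hw : 0 ≤ w) {p : ℝ} (hp0 : 0 < p)
    (hp1 : p ≤ 1) (u v : ι → ℝ) (hu : ∀ i, 0 ≤ u i) (hv : ∀ i, 0 ≤ v i) :
    (∑ i, w * u i ^ p) ^ (1 / p) + (∑ i, w * v i ^ p) ^ (1 / p)
      ≤ (∑ i, w * (u i + v i) ^ p) ^ (1 / p) := by
  set A := ∑ i, w * u i ^ p with hA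
  set B := ∑ i, w * v i ^ p with hB
  set C := ∑ i, w * (u i + v i) ^ p with hC
  have hA0 : 0 ≤ A := Finset.sum_nonneg fun i _ =>
    mul_nonneg hw (Real.rpow_nonneg (hu i) p)
  have hB0 : 0 ≤ B := Finset.sum_nonneg fun i _ =>
    mul_nonneg hw (Real.rpow_nonneg (hv i) p)
  have hAC : A ≤ C := Finset.sum_le_sum fun i _ => by
    apply mul_le_mul_of_nonneg_left _ hw
    exact Real.rpow_le_rpow (hu i) (by linarith [hv i]) hp0.le
  have hBC : B ≤ C := Finset.sum_le_sum fun i _ => by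
    apply mul_le_mul_of_nonneg_left _ hw
    exact Real.rpow_le_rpow (hv i) (by linarith [hu i]) hp0.le
  have hC0 : 0 ≤ C := le_trans hA0 hAC
  rcases eq_or_lt_of_le hA0 with hA0' | hA0'
  · rw [← hA0', Real.zero_rpow (by positivity : (1:ℝ)/p ≠ 0), zero_add]
    exact Real.rpow_le_rpow hB0 hBC (by positivity)
  rcases eq_or_lt_of_le hB0 with hB0' | hB0'
  · rw [← hB0', Real.zero_rpow (by positivity : (1:ℝ)/p ≠ 0), add_zero]
    exact Real.rpow_le_rpow hA0 hAC (by positivity)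
  set S := A ^ (1/p) with hS
  set T := B ^ (1/p) with hT
  have hS0 : 0 < S := Real.rpow_pos_of_pos hA0' _
  have hT0 : 0 < T := Real.rpow_pos_of_pos hB0' _
  have hST : 0 < S + T := by linarith
  have hSp : S ^ p = A := by
    rw [hS, ← Real.rpow_mul hA0]
    rw [show 1 / p * p = 1 by field_simp, Real.rpow_one]
  have hTp : T ^ p = B := by
    rw [hT, ← Real.rpow_mul hB0]
    rw [show 1 / p * p = 1 by field_simp, Real.rpow_one]
  have hSTp : 0 < (S + T) ^ p := Real.rpow_pos_of_pos hST p
  -- pointwise concavity step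
  have key : ∀ i : ι, (S + T) ^ p * (S / (S + T) * (u i / S) ^ p
      + T / (S + T) * (v i / T) ^ p) ≤ (u i + v i) ^ p := by
    intro i
    have hfx : u i / S ∈ Set.Ici (0:ℝ) := Set.mem_Ici.2 (div_nonneg (hu i) hS0.le)
    have hfy : v i / T ∈ Set.Ici (0:ℝ) := Set.mem_Ici.2 (div_nonneg (hv i) hT0.le)
    have hab : S / (S + T) + T / (S + T) = 1 := by field_simp
    have hcon := (Real.concaveOn_rpow hp0.le hp1).2 hfx hfy
      (div_nonneg hS0.le hST.le) (div_nonneg hT0.le hST.le) hab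
    simp only [smul_eq_mul] at hcon
    have hxy : S / (S + T) * (u i / S) + T / (S + T) * (v i / T)
        = (u i + v i) / (S + T) := by field_simp
    rw [hxy] at hcon
    have := mul_le_mul_of_nonneg_left hcon hSTp.le
    calc (S + T) ^ p * (S / (S + T) * (u i / S) ^ p + T / (S + T) * (v i / T) ^ p)
        ≤ (S + T) ^ p * ((u i + v i) / (S + T)) ^ p := this
      _ = (u i + v i) ^ p := by
          rw [Real.div_rpow (by linarith [hu i, hv i]) hST.le]
          field_simp
  -- sum the pointwise inequality
  have hCST : (S + T) ^ p ≤ C := by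
    have hsum : ∑ i, w * ((S + T) ^ p * (S / (S + T) * (u i / S) ^ p
        + T / (S + T) * (v i / T) ^ p)) ≤ C :=
      Finset.sum_le_sum fun i _ => mul_le_mul_of_nonneg_left (key i) hw
    have hexp : ∀ i : ι, w * ((S + T) ^ p * (S / (S + T) * (u i / S) ^ p
        + T / (S + T) * (v i / T) ^ p))
        = ((S + T) ^ p * (S / (S + T) / S ^ p)) * (w * u i ^ p)
          + ((S + T) ^ p * (T / (S + T) / T ^ p)) * (w * v i ^ p) := by
      intro i
      rw [Real.div_rpow (hu i) hS0.le, Real.div_rpow (hv i) hT0.le]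
      ring
    have hsum2 : ∑ i, w * ((S + T) ^ p * (S / (S + T) * (u i / S) ^ p
        + T / (S + T) * (v i / T) ^ p))
        = ((S + T) ^ p * (S / (S + T) / S ^ p)) * A
          + ((S + T) ^ p * (T / (S + T) / T ^ p)) * B := by
      rw [Finset.sum_congr rfl fun i _ => hexp i, Finset.sum_add_distrib]
      congr 1
      · rw [hA, Finset.mul_sum]
      · rw [hB, Finset.mul_sum]
    rw [hsum2, hSp, hTp] at hsum
    have heq : ((S + T) ^ p * (S / (S + T) / A)) * A
        + ((S + T) ^ p * (T / (S + T) / B)) * B = (S + T) ^ p := by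
      field_simp
    rw [heq] at hsum
    exact hsum
  calc S + T = ((S + T) ^ p) ^ (1/p) := by
        rw [← Real.rpow_mul hST.le, show p * (1 / p) = 1 by field_simp, Real.rpow_one]
    _ ≤ C ^ (1/p) := Real.rpow_le_rpow hSTp.le hCST (by positivity)

lemma sum_split {n : ℕ} {M : Type*} [AddCommMonoid M] (F : (Fin (n+1) → Bool) → M) :
    ∑ y : Fin (n+1) → Bool, F y
      = (∑ x : Fin n → Bool, F (Fin.cons false x))
        + ∑ x : Fin n → Bool, F (Fin.cons true x) := by
  rw [← Equiv.sum_comp (Fin.consEquiv (fun _ => Bool)) F, Fintype.sum_prod_type,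
    Fintype.sum_bool]
  rw [add_comm]
  rfl

lemma hw_cons {n : ℕ} (b : Bool) (s : Fin n → Bool) :
    hw (Fin.cons b s) = (if b = true then 1 else 0) + hw s := by
  unfold hw
  rw [Finset.card_filter, Finset.card_filter, Fin.sum_univ_succ]
  simp [Fin.cons_zero, Fin.cons_succ]

lemma chi_cons {n : ℕ} (a b : Bool) (s x : Fin n → Bool) :
    chi (Fin.cons a s) (Fin.cons b x)
      = (if a = true ∧ b = true then (-1:ℝ) else 1) * chi s x := by
  unfold chi
  rw [Finset.card_filter, Finset.card_filter, Fin.sum_univ_succ]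
  simp only [Fin.cons_zero, Fin.cons_succ, pow_add]
  by_cases h : a = true ∧ b = true <;> simp [h]


theorem key_ind (n : ℕ) (δ : ℝ) (hδ0 : 0 ≤ δ) (hδ1 : δ ≤ 1) (f : (Fin n → Bool) → ℝ) :
    ∑ s : Fin n → Bool, δ ^ hw s * ((1 / 2 ^ n : ℝ) * ∑ x : Fin n → Bool, f x * chi s x) ^ 2
      ≤ ((1 / 2 ^ n : ℝ) * ∑ x : Fin n → Bool, |f x| ^ (1 + δ)) ^ ((2:ℝ) / (1 + δ)) := by
  have hq1 : (1:ℝ) ≤ 1 + δ := by linarith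
  have hq0 : (0:ℝ) < 1 + δ := by linarith
  have hq2 : (1:ℝ) + δ ≤ 2 := by linarith
  induction n with
  | zero =>
      have hu : ∀ (z : Fin 0 → Bool), z = default := fun z => Subsingleton.elim z default
      rw [Fintype.sum_eq_single default (fun s hs => absurd (hu s) hs),
        Fintype.sum_eq_single (default : Fin 0 → Bool) (fun s hs => absurd (hu s) hs),
        Fintype.sum_eq_single (default : Fin 0 → Bool) (fun s hs => absurd (hu s) hs)]
      have h1 : hw (default : Fin 0 → Bool) = 0 := by
        unfold hw; simp
      have h2 : chi (default : Fin 0 → Bool) (default : Fin 0 → Bool) = 1 := by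
        unfold chi; simp
      rw [h1, h2]
      have h3 : (|f default| ^ (1 + δ)) ^ ((2:ℝ) / (1 + δ)) = f default ^ 2 := by
        rw [← Real.rpow_mul (abs_nonneg _), show (1 + δ) * ((2:ℝ)/(1+δ)) = 2 by field_simp,
          show (2:ℝ) = ((2:ℕ):ℝ) by norm_num, Real.rpow_natCast, sq_abs]
      simp only [pow_zero, pow_zero, one_mul, mul_one]
      rw [show ((1:ℝ)/1) = 1 by norm_num, one_mul, one_mul, h3]
  | succ n ih =>
      set q : ℝ := 1 + δ with hqdef
      set g : (Fin n → Bool) → ℝ :=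
        fun x => (f (Fin.cons false x) + f (Fin.cons true x)) / 2 with hg
      set h : (Fin n → Bool) → ℝ :=
        fun x => (f (Fin.cons false x) - f (Fin.cons true x)) / 2 with hh
      have hgh1 : ∀ x, f (Fin.cons false x) = g x + h x := by intro x; rw [hg, hh]; ring
      have hgh2 : ∀ x, f (Fin.cons true x) = g x - h x := by intro x; rw [hg, hh]; ring
      -- inner sums
      have hinF : ∀ s : Fin n → Bool,
          ∑ y : Fin (n+1) → Bool, f y * chi (Fin.cons false s) y
            = 2 * ∑ x : Fin n → Bool, g x * chi s x := by
        intro s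
        rw [sum_split (fun y => f y * chi (Fin.cons false s) y), ← Finset.sum_add_distrib,
          Finset.mul_sum]
        apply Finset.sum_congr rfl
        intro x _
        rw [chi_cons, chi_cons, hg]
        norm_num
        ring
      have hinT : ∀ s : Fin n → Bool,
          ∑ y : Fin (n+1) → Bool, f y * chi (Fin.cons true s) y
            = 2 * ∑ x : Fin n → Bool, h x * chi s x := by
        intro s
        rw [sum_split (fun y => f y * chi (Fin.cons true s) y), ← Finset.sum_add_distrib,
          Finset.mul_sum]
        apply Finset.sum_congr rfl
        intro x _
        rw [chi_cons, chi_cons, hh]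
        norm_num
        ring
      have hwF : ∀ s : Fin n → Bool, hw (Fin.cons false s) = hw s := by
        intro s; rw [hw_cons]; simp
      have hwT : ∀ s : Fin n → Bool, hw (Fin.cons true s) = 1 + hw s := by
        intro s; rw [hw_cons]; simp
      have hL : ∑ s' : Fin (n+1) → Bool,
            δ ^ hw s' * ((1/2^(n+1) : ℝ) * ∑ y : Fin (n+1) → Bool, f y * chi s' y)^2
          = (∑ s : Fin n → Bool,
              δ ^ hw s * ((1/2^n : ℝ) * ∑ x : Fin n → Bool, g x * chi s x)^2)
            + δ * ∑ s : Fin n → Bool,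
                δ ^ hw s * ((1/2^n : ℝ) * ∑ x : Fin n → Bool, h x * chi s x)^2 := by
        rw [sum_split (fun s' => δ ^ hw s' *
          ((1/2^(n+1) : ℝ) * ∑ y : Fin (n+1) → Bool, f y * chi s' y)^2)]
        congr 1
        · apply Finset.sum_congr rfl
          intro s _
          rw [hinF s, hwF s, pow_succ]
          ring
        · rw [Finset.mul_sum]
          apply Finset.sum_congr rfl
          intro s _
          rw [hinT s, hwT s, pow_add, pow_one, pow_succ]
          ring
      have hR : (1/2^(n+1) : ℝ) * ∑ y : Fin (n+1) → Bool, |f y| ^ q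
          = ∑ x : Fin n → Bool,
              (1/2^n : ℝ) * ((|g x + h x| ^ q + |g x - h x| ^ q) / 2) := by
        rw [sum_split (fun y => |f y| ^ q), ← Finset.sum_add_distrib, Finset.mul_sum]
        apply Finset.sum_congr rfl
        intro x _
        rw [hgh1 x, hgh2 x, pow_succ]
        ring
      rw [hL]
      -- apply the induction hypothesis
      have ihg := ih g
      have ihh := ih h
      have hδLh : δ * ∑ s : Fin n → Bool,
            δ ^ hw s * ((1/2^n : ℝ) * ∑ x : Fin n → Bool, h x * chi s x)^2
          ≤ δ * ((1/2^n : ℝ) * ∑ x : Fin n → Bool, |h x| ^ q) ^ ((2:ℝ)/q) :=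
        mul_le_mul_of_nonneg_left ihh hδ0
      -- reverse Minkowski step
      have hp0 : (0:ℝ) < q / 2 := by positivity
      have hp1 : q / 2 ≤ 1 := by
        rw [hqdef]; linarith
      have hpinv : 1 / (q / 2) = (2:ℝ) / q := by
        rw [one_div, inv_div]
      have hrm := aux_rev_mink (show (0:ℝ) ≤ 1/2^n by positivity) hp0 hp1
        (fun x => g x ^ 2) (fun x => δ * h x ^ 2)
        (fun x => sq_nonneg _) (fun x => mul_nonneg hδ0 (sq_nonneg _))
      rw [hpinv] at hrm
      have c1 : ∀ u : ℝ, (u ^ 2) ^ (q/2) = |u| ^ q := by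
        intro u
        rw [← sq_abs, ← Real.rpow_natCast |u| 2, ← Real.rpow_mul (abs_nonneg _),
          show ((2:ℕ):ℝ) * (q/2) = q by push_cast; ring]
      have e1 : (∑ x : Fin n → Bool, (1/2^n : ℝ) * (g x ^ 2) ^ (q/2))
          = (1/2^n : ℝ) * ∑ x : Fin n → Bool, |g x| ^ q := by
        rw [Finset.mul_sum]
        exact Finset.sum_congr rfl fun x _ => by rw [c1]
      have e2 : (∑ x : Fin n → Bool, (1/2^n : ℝ) * (δ * h x ^ 2) ^ (q/2))
          = δ ^ (q/2) * ((1/2^n : ℝ) * ∑ x : Fin n → Bool, |h x| ^ q) := by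
        rw [Finset.mul_sum, Finset.mul_sum]
        apply Finset.sum_congr rfl
        intro x _
        rw [Real.mul_rpow hδ0 (sq_nonneg _), c1]
        ring
      rw [e1, e2] at hrm
      have hNh0 : (0:ℝ) ≤ (1/2^n : ℝ) * ∑ x : Fin n → Bool, |h x| ^ q := by
        apply mul_nonneg (by positivity)
        exact Finset.sum_nonneg fun x _ => Real.rpow_nonneg (abs_nonneg _) q
      have e3 : (δ ^ (q/2) * ((1/2^n : ℝ) * ∑ x : Fin n → Bool, |h x| ^ q)) ^ ((2:ℝ)/q)
          = δ * ((1/2^n : ℝ) * ∑ x : Fin n → Bool, |h x| ^ q) ^ ((2:ℝ)/q) := by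
        rw [Real.mul_rpow (Real.rpow_nonneg hδ0 _) hNh0, ← Real.rpow_mul hδ0,
          show (q/2) * ((2:ℝ)/q) = 1 by field_simp, Real.rpow_one]
      rw [e3] at hrm
      -- pointwise two-point inequality
      have htp : ∀ x : Fin n → Bool,
          (g x ^ 2 + δ * h x ^ 2) ^ (q/2)
            ≤ (|g x + h x| ^ q + |g x - h x| ^ q) / 2 := by
        intro x
        have := aux_two_point hq1 hq2 (g x) (h x)
        rwa [show q - 1 = δ by rw [hqdef]; ring] at this
      have hM0 : (0:ℝ) ≤ ∑ x : Fin n → Bool, (1/2^n : ℝ) * (g x ^ 2 + δ * h x ^ 2) ^ (q/2) :=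
        Finset.sum_nonneg fun x _ => mul_nonneg (by positivity)
          (Real.rpow_nonneg (by positivity) _)
      have hMN : (∑ x : Fin n → Bool, (1/2^n : ℝ) * (g x ^ 2 + δ * h x ^ 2) ^ (q/2))
          ≤ (1/2^(n+1) : ℝ) * ∑ y : Fin (n+1) → Bool, |f y| ^ q := by
        rw [hR]
        exact Finset.sum_le_sum fun x _ =>
          mul_le_mul_of_nonneg_left (htp x) (by positivity)
      have hfin : (∑ x : Fin n → Bool, (1/2^n : ℝ) * (g x ^ 2 + δ * h x ^ 2) ^ (q/2)) ^ ((2:ℝ)/q)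
          ≤ ((1/2^(n+1) : ℝ) * ∑ y : Fin (n+1) → Bool, |f y| ^ q) ^ ((2:ℝ)/q) :=
        Real.rpow_le_rpow hM0 hMN (by positivity)
      calc (∑ s : Fin n → Bool,
              δ ^ hw s * ((1/2^n : ℝ) * ∑ x : Fin n → Bool, g x * chi s x)^2)
            + δ * ∑ s : Fin n → Bool,
                δ ^ hw s * ((1/2^n : ℝ) * ∑ x : Fin n → Bool, h x * chi s x)^2
          ≤ ((1/2^n : ℝ) * ∑ x : Fin n → Bool, |g x| ^ q) ^ ((2:ℝ)/q)
            + δ * ((1/2^n : ℝ) * ∑ x : Fin n → Bool, |h x| ^ q) ^ ((2:ℝ)/q) :=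
            add_le_add ihg hδLh
        _ ≤ (∑ x : Fin n → Bool, (1/2^n : ℝ) * (g x ^ 2 + δ * h x ^ 2) ^ (q/2)) ^ ((2:ℝ)/q) :=
            hrm
        _ ≤ ((1/2^(n+1) : ℝ) * ∑ y : Fin (n+1) → Bool, |f y| ^ q) ^ ((2:ℝ)/q) := hfin

/-- KKL-type inequality (Lemma 4.18): for `f : {0,1}^n → {-1,0,1}` with support `A`,
for every `δ ∈ [0,1]`,
`∑_s δ^{|s|} f̂(s)² ≤ (|A|/2^n)^{2/(1+δ)}` where `f̂(s) = 2^{-n} ∑_x f(x)(-1)^{s·x}`. -/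
theorem stmt0 (n : ℕ) (hn : 0 < n) (f : (Fin n → Bool) → ℝ)
    (hf : ∀ x, f x = -1 ∨ f x = 0 ∨ f x = 1)
    (δ : ℝ) (hδ0 : 0 ≤ δ) (hδ1 : δ ≤ 1) :
    ∑ s : Fin n → Bool,
        δ ^ hw s * ((1 / 2 ^ n) * ∑ x : Fin n → Bool, f x * chi s x) ^ 2 ≤
      (((Finset.univ.filter (fun x : Fin n → Bool => f x ≠ 0)).card : ℝ) / 2 ^ n)
        ^ ((2 : ℝ) / (1 + δ)) := by
  have hq0 : (0:ℝ) < 1 + δ := by linarith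
  have key := key_ind n δ hδ0 hδ1 f
  have hsum : ∑ x : Fin n → Bool, |f x| ^ (1 + δ)
      = ((Finset.univ.filter (fun x : Fin n → Bool => f x ≠ 0)).card : ℝ) := by
    rw [← Finset.sum_boole]
    apply Finset.sum_congr rfl
    intro x _
    rcases hf x with hx | hx | hx
    · rw [hx]; norm_num [Real.one_rpow]
    · rw [hx]; norm_num [Real.zero_rpow hq0.ne']
    · rw [hx]; norm_num [Real.one_rpow]
  rw [hsum, one_div_mul_eq_div] at key
  exact key
end
end

section
/- Let n and c be positive integers, and let A ⊆ {0,1}^n with |A| ≥ 2^{n−c}. Then for every integer k with 1 ≤ k ≤ c, every partition P of {1,…,n}, and every set S ⊆ {0,1}^n all of whose elements are indicator vectors of unions of exactly k parts of P, one has ∑_{v ∈ S} f̃(v)² ≤ (4c/k)^k. -/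
open scoped Classical

noncomputable section

/-- Normalized Fourier coefficient of (the indicator of) `A ⊆ {0,1}^n`:
`f̃(z) = (1/|A|) ∑_{x ∈ A} (-1)^{z·x}`. -/
def ftilde {n : ℕ} (A : Finset (Fin n → Bool)) (z : Fin n → Bool) : ℝ :=
  (1 / A.card) * ∑ x ∈ A, chi z x

namespace Stmt3Aux

open Finset

/-- Key binomial inequality: `C(2m,2l) ≤ C(m,l) * (2m-1)^l`. -/
lemma binom_ineq (m : ℕ) : ∀ l : ℕ, Nat.choose (2*m) (2*l) ≤ Nat.choose m l * (2*m-1)^l := by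
  intro l
  induction l with
  | zero => simp
  | succ l ih =>
    have h1 : Nat.choose (2*m) (2*l+1) * (2*l+1) = Nat.choose (2*m) (2*l) * (2*m - 2*l) :=
      Nat.choose_succ_right_eq _ _
    have h2 : Nat.choose (2*m) (2*l+2) * (2*l+2) = Nat.choose (2*m) (2*l+1) * (2*m - (2*l+1)) :=
      Nat.choose_succ_right_eq _ _
    have h3 : Nat.choose m (l+1) * (l+1) = Nat.choose m l * (m - l) :=
      Nat.choose_succ_right_eq _ _
    have key : Nat.choose (2*m) (2*(l+1)) * ((2*l+1)*(2*l+2))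
        ≤ (Nat.choose m (l+1) * (2*m-1)^(l+1)) * ((2*l+1)*(2*l+2)) := by
      have e1 : Nat.choose (2*m) (2*(l+1)) * ((2*l+1)*(2*l+2))
          = Nat.choose (2*m) (2*l) * ((2*m - 2*l) * (2*m - (2*l+1))) := by
        have : 2*(l+1) = 2*l+2 := by ring
        rw [this]
        calc Nat.choose (2*m) (2*l+2) * ((2*l+1)*(2*l+2))
            = (Nat.choose (2*m) (2*l+2) * (2*l+2)) * (2*l+1) := by ring
          _ = (Nat.choose (2*m) (2*l+1) * (2*m - (2*l+1))) * (2*l+1) := by rw [h2]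
          _ = (Nat.choose (2*m) (2*l+1) * (2*l+1)) * (2*m - (2*l+1)) := by ring
          _ = (Nat.choose (2*m) (2*l) * (2*m - 2*l)) * (2*m - (2*l+1)) := by rw [h1]
          _ = _ := by ring
      have e2 : (Nat.choose m (l+1) * (2*m-1)^(l+1)) * ((2*l+1)*(2*l+2))
          = (Nat.choose m l * (m-l)) * ((2*m-1)^(l+1) * (2*(2*l+1))) := by
        calc (Nat.choose m (l+1) * (2*m-1)^(l+1)) * ((2*l+1)*(2*l+2))
            = (Nat.choose m (l+1) * (l+1)) * ((2*m-1)^(l+1) * (2*(2*l+1))) := by ring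
          _ = _ := by rw [h3]
      rw [e1, e2]
      -- now pure arithmetic
      have hsub : (2*m - 2*l) * (2*m - (2*l+1)) ≤ (m - l) * ((2*m-1)^1 * (2*(2*l+1))) := by
        have : 2*m - 2*l = 2*(m-l) := by omega
        rw [this]
        have h4 : 2*m - (2*l+1) ≤ (2*m-1) * (2*l+1) := by
          rcases Nat.eq_zero_or_pos m with hm | hm
          · omega
          · calc 2*m - (2*l+1) ≤ 2*m-1 := by omega
              _ ≤ (2*m-1) * (2*l+1) := Nat.le_mul_of_pos_right _ (by omega)
        calc 2*(m-l) * (2*m - (2*l+1)) ≤ 2*(m-l) * ((2*m-1)*(2*l+1)) :=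
              Nat.mul_le_mul_left _ h4
          _ = (m-l) * ((2*m-1)^1 * (2*(2*l+1))) := by ring
      calc Nat.choose (2*m) (2*l) * ((2*m - 2*l) * (2*m - (2*l+1)))
          ≤ (Nat.choose m l * (2*m-1)^l) * ((m-l) * ((2*m-1)^1 * (2*(2*l+1)))) :=
            Nat.mul_le_mul ih hsub
        _ = (Nat.choose m l * (m-l)) * ((2*m-1)^(l+1) * (2*(2*l+1))) := by ring
    exact Nat.le_of_mul_le_mul_right key (by positivity)

/-- `(X+Y)^m + (X-Y)^m = ∑ⱼ C(m,j) Xʲ Y^(m-j) (1+(-1)^(m-j))`. -/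
lemma pair_pow (m : ℕ) (X Y : ℝ) :
    (X+Y)^m + (X-Y)^m
      = ∑ j ∈ range (m+1), X^j * Y^(m-j) * (Nat.choose m j : ℝ) * (1 + (-1)^(m-j)) := by
  rw [add_pow, sub_eq_add_neg, add_pow, ← Finset.sum_add_distrib]
  refine Finset.sum_congr rfl fun j _ => ?_
  rw [neg_pow Y (m-j)]
  ring

/-- Even-index extraction: `∑_{t ∈ range (2r+1)} F t * (1+(-1)^(2r-t)) = 2 * ∑_{l ≤ r} F (2l)`. -/
lemma even_extract (F : ℕ → ℝ) : ∀ r : ℕ,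
    ∑ t ∈ range (2*r+1), F t * (1 + (-1:ℝ)^(2*r-t)) = 2 * ∑ l ∈ range (r+1), F (2*l) := by
  intro r
  induction r with
  | zero => simp; ring
  | succ r ih =>
    have hr : 2*(r+1)+1 = (2*r+1) + 1 + 1 := by ring
    rw [hr, Finset.sum_range_succ, Finset.sum_range_succ]
    have hshift : ∑ t ∈ range (2*r+1), F t * (1 + (-1:ℝ)^(2*(r+1)-t))
        = ∑ t ∈ range (2*r+1), F t * (1 + (-1:ℝ)^(2*r-t)) := by
      refine Finset.sum_congr rfl fun t ht => ?_
      have ht' : t ≤ 2*r := by simpa [Nat.lt_succ_iff] using Finset.mem_range.mp ht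
      have : 2*(r+1) - t = (2*r-t) + 2 := by omega
      rw [this, pow_add]
      norm_num
    have h1 : 2*(r+1) - (2*r+1) = 1 := by omega
    have h2 : 2*(r+1) - (2*r+1+1) = 0 := by omega
    rw [hshift, ih, h1, h2]
    have : 2*r+1+1 = 2*(r+1) := by ring
    rw [this, Finset.sum_range_succ (n := r+1), Finset.sum_range_succ (n := r)]
    norm_num
    ring

/-- monotonicity in `|Y|`: for `X ≥ 0`, `Y² ≤ B²`, `B ≥ 0`:
`(X+Y)^m + (X-Y)^m ≤ (X+B)^m + (X-B)^m`. -/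
lemma pair_pow_mono (m : ℕ) (X Y B : ℝ) (hX : 0 ≤ X) (hB : 0 ≤ B) (hY : Y^2 ≤ B^2) :
    (X+Y)^m + (X-Y)^m ≤ (X+B)^m + (X-B)^m := by
  rw [pair_pow, pair_pow]
  refine Finset.sum_le_sum fun j hj => ?_
  rcases Nat.even_or_odd (m-j) with he | ho
  · obtain ⟨l, hl⟩ := he
    have hYB : Y^(m-j) ≤ B^(m-j) := by
      rw [hl]
      have : ∀ Z : ℝ, Z^(l+l) = (Z^2)^l := by
        intro Z; rw [← pow_mul]; ring_nf
      rw [this Y, this B]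
      exact pow_le_pow_left₀ (sq_nonneg Y) hY l
    have hfac : (0:ℝ) ≤ 1 + (-1)^(m-j) := by
      rw [hl, pow_add]
      have : ((-1:ℝ))^l * (-1)^l = ((-1)^l)^2 := by ring
      rw [this]
      positivity
    have hXj : (0:ℝ) ≤ X^j := pow_nonneg hX j
    have hC : (0:ℝ) ≤ (Nat.choose m j : ℝ) := Nat.cast_nonneg _
    calc X^j * Y^(m-j) * (Nat.choose m j : ℝ) * (1 + (-1)^(m-j))
        ≤ X^j * B^(m-j) * (Nat.choose m j : ℝ) * (1 + (-1)^(m-j)) := by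
          apply mul_le_mul_of_nonneg_right _ hfac
          apply mul_le_mul_of_nonneg_right _ hC
          exact mul_le_mul_of_nonneg_left hYB hXj
      _ = _ := rfl
  · have : (1:ℝ) + (-1)^(m-j) = 0 := by
      rw [Odd.neg_one_pow ho]; ring
    rw [this]; ring_nf; rfl

/-- Two-point inequality for hypercontractivity. -/
lemma twopoint (m : ℕ) (U V Y : ℝ) (hU : 0 ≤ U) (hV : 0 ≤ V) (hY : Y^2 ≤ 4*(U*V)) :
    (U+V+Y)^m + (U+V-Y)^m ≤ 2*(U + (2*(m:ℝ)-1)*V)^m := by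
  set u := Real.sqrt U with hu
  set v := Real.sqrt V with hv
  have hu0 : 0 ≤ u := Real.sqrt_nonneg U
  have hv0 : 0 ≤ v := Real.sqrt_nonneg V
  have hU' : u^2 = U := Real.sq_sqrt hU
  have hV' : v^2 = V := Real.sq_sqrt hV
  have hB : (0:ℝ) ≤ 2*u*v := by positivity
  have hYB : Y^2 ≤ (2*u*v)^2 := by
    calc Y^2 ≤ 4*(U*V) := hY
      _ = (2*u*v)^2 := by rw [← hU', ← hV']; ring
  have step1 : (U+V+Y)^m + (U+V-Y)^m ≤ (U+V+2*u*v)^m + (U+V-(2*u*v))^m :=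
    pair_pow_mono m (U+V) Y (2*u*v) (by positivity) hB hYB
  have e1 : U+V+2*u*v = (u+v)^2 := by rw [← hU', ← hV']; ring
  have e2 : U+V-(2*u*v) = (u-v)^2 := by rw [← hU', ← hV']; ring
  have step2 : (U+V+2*u*v)^m + (U+V-(2*u*v))^m = (u+v)^(2*m) + (u-v)^(2*m) := by
    rw [e1, e2, ← pow_mul, ← pow_mul]
  -- now expand (u+v)^(2m) + (u-v)^(2m)
  have step3 : (u+v)^(2*m) + (u-v)^(2*m)
      = 2 * ∑ l ∈ range (m+1),
          u^(2*l) * v^(2*m-2*l) * (Nat.choose (2*m) (2*l) : ℝ) := by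
    rw [pair_pow (2*m) u v]
    have := even_extract (fun t => u^t * v^(2*m-t) * (Nat.choose (2*m) t : ℝ)) m
    simpa using this
  have step4 : ∑ l ∈ range (m+1), u^(2*l) * v^(2*m-2*l) * (Nat.choose (2*m) (2*l) : ℝ)
      ≤ ∑ l ∈ range (m+1), U^l * ((2*(m:ℝ)-1)*V)^(m-l) * (Nat.choose m l : ℝ) := by
    refine Finset.sum_le_sum fun l hl => ?_
    have hlm : l ≤ m := by simpa [Nat.lt_succ_iff] using Finset.mem_range.mp hl
    have hul : u^(2*l) = U^l := by rw [← hU', ← pow_mul]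
    have hvl : v^(2*m-2*l) = V^(m-l) := by
      rw [← hV', ← pow_mul]
      congr 1
      omega
    have hcast : (Nat.choose (2*m) (2*l) : ℝ) ≤ (Nat.choose m l : ℝ) * (2*(m:ℝ)-1)^(m-l) := by
      rcases Nat.eq_zero_or_pos m with hm | hm
      · subst hm
        interval_cases l
        simp
      · have h := binom_ineq m (m - l)
        have h2 : Nat.choose (2*m) (2*(m-l)) = Nat.choose (2*m) (2*l) := by
          have : 2*l ≤ 2*m := by omega
          rw [← Nat.choose_symm (by omega : 2*(m-l) ≤ 2*m)]
          congr 1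
          omega
        have h3 : Nat.choose m (m-l) = Nat.choose m l := by
          rw [← Nat.choose_symm (by omega : m - l ≤ m)]
          congr 1
          omega
        rw [h2, h3] at h
        have := Nat.cast_le (α := ℝ).mpr h
        push_cast at this
        calc (Nat.choose (2*m) (2*l) : ℝ) ≤ (Nat.choose m l : ℝ) * ((2*m-1 : ℕ) : ℝ)^(m-l) := by
              exact_mod_cast this
          _ = (Nat.choose m l : ℝ) * (2*(m:ℝ)-1)^(m-l) := by
              congr 2
              push_cast [Nat.cast_sub (by omega : 1 ≤ 2*m)]
              ring
    have hUl : (0:ℝ) ≤ U^l := pow_nonneg hU l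
    have hVl : (0:ℝ) ≤ V^(m-l) := pow_nonneg hV _
    calc u^(2*l) * v^(2*m-2*l) * (Nat.choose (2*m) (2*l) : ℝ)
        = U^l * V^(m-l) * (Nat.choose (2*m) (2*l) : ℝ) := by rw [hul, hvl]
      _ ≤ U^l * V^(m-l) * ((Nat.choose m l : ℝ) * (2*(m:ℝ)-1)^(m-l)) := by
          apply mul_le_mul_of_nonneg_left hcast (by positivity)
      _ = U^l * ((2*(m:ℝ)-1)*V)^(m-l) * (Nat.choose m l : ℝ) := by
          rw [mul_pow]; ring
  have step5 : ∑ l ∈ range (m+1), U^l * ((2*(m:ℝ)-1)*V)^(m-l) * (Nat.choose m l : ℝ)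
      = (U + (2*(m:ℝ)-1)*V)^m := by
    rw [add_pow]
  calc (U+V+Y)^m + (U+V-Y)^m ≤ (u+v)^(2*m) + (u-v)^(2*m) := by rw [← step2]; exact step1
    _ = 2 * ∑ l ∈ range (m+1), u^(2*l) * v^(2*m-2*l) * (Nat.choose (2*m) (2*l) : ℝ) := step3
    _ ≤ 2 * ((U + (2*(m:ℝ)-1)*V)^m) := by
        rw [← step5]
        have := step4
        linarith
    _ = _ := by ring

/-- Two-term AM-GM with natural exponents. -/
lemma amgm_two (x y : ℝ) (hx : 0 ≤ x) (hy : 0 ≤ y) {t d : ℕ} (htd : t ≤ d) (hd : 0 < d) :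
    x^t * y^(d-t) * (d:ℝ)^d ≤ ((t:ℝ)*x + ((d-t:ℕ):ℝ)*y)^d := by
  have hd0 : (0:ℝ) < (d:ℝ) := by exact_mod_cast hd
  have hw1 : (0:ℝ) ≤ (t:ℝ)/(d:ℝ) := by positivity
  have hw2 : (0:ℝ) ≤ ((d-t:ℕ):ℝ)/(d:ℝ) := by positivity
  have hw : (t:ℝ)/(d:ℝ) + ((d-t:ℕ):ℝ)/(d:ℝ) = 1 := by
    rw [Nat.cast_sub htd]
    field_simp
    ring
  have gm := Real.geom_mean_le_arith_mean2_weighted hw1 hw2 hx hy hw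
  have gmnn : (0:ℝ) ≤ x ^ ((t:ℝ)/(d:ℝ)) * y ^ (((d-t:ℕ):ℝ)/(d:ℝ)) := by
    apply mul_nonneg <;> exact Real.rpow_nonneg (by assumption) _
  have key := pow_le_pow_left₀ gmnn gm d
  have lhs_eq : (x ^ ((t:ℝ)/(d:ℝ)) * y ^ (((d-t:ℕ):ℝ)/(d:ℝ)))^d = x^t * y^(d-t) := by
    rw [mul_pow, ← Real.rpow_natCast (x ^ ((t:ℝ)/(d:ℝ))) d, ← Real.rpow_natCast (y ^ (((d-t:ℕ):ℝ)/(d:ℝ))) d,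
      ← Real.rpow_mul hx, ← Real.rpow_mul hy]
    have e1 : (t:ℝ)/(d:ℝ) * (d:ℕ) = (t:ℕ) := by field_simp
    have e2 : ((d-t:ℕ):ℝ)/(d:ℝ) * (d:ℕ) = ((d-t:ℕ):ℝ) := by field_simp
    rw [e1, e2, Real.rpow_natCast, Real.rpow_natCast]
  have rhs_eq : ((t:ℝ)/(d:ℝ) * x + ((d-t:ℕ):ℝ)/(d:ℝ) * y)^d
      = ((t:ℝ)*x + ((d-t:ℕ):ℝ)*y)^d / (d:ℝ)^d := by
    rw [← div_pow]
    congr 1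
    field_simp
  rw [lhs_eq, rhs_eq] at key
  calc x^t * y^(d-t) * (d:ℝ)^d
      ≤ (((t:ℝ)*x + ((d-t:ℕ):ℝ)*y)^d / (d:ℝ)^d) * (d:ℝ)^d := by
        apply mul_le_mul_of_nonneg_right key (by positivity)
    _ = ((t:ℝ)*x + ((d-t:ℕ):ℝ)*y)^d := by field_simp

lemma arith (c k : ℕ) (hk1 : 1 ≤ k) (hkc : k ≤ c) :
    ∃ m : ℕ, 1 ≤ m ∧ (2:ℝ)^c * (2*(m:ℝ)-1)^(k*m) ≤ (((4*c:ℝ)/k)^k)^m := by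
  refine ⟨c/k, (Nat.one_le_div_iff (by omega)).mpr hkc, ?_⟩
  set m := c/k with hm
  have hm1 : 1 ≤ m := (Nat.one_le_div_iff (by omega)).mpr hkc
  set d := k*m with hdd
  have hd1 : 1 ≤ d := Nat.one_le_iff_ne_zero.mpr (by positivity)
  have hdc : d ≤ c := by
    rw [hdd, mul_comm]
    exact Nat.div_mul_le_self c k
  have hkd : k ≤ d := Nat.le_mul_of_pos_right k (by omega)
  have hc2d : c ≤ 2*d := by
    have h1 : k*m + c%k = c := by rw [hm]; exact Nat.div_add_mod c k
    have h2 : c % k < k := Nat.mod_lt _ (by omega)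
    have h3 : k ≤ k*m := by
      calc k = k*1 := by ring
        _ ≤ k*m := Nat.mul_le_mul_left k hm1
    rw [hdd]
    omega
  set t := c - d with ht
  have htd : t ≤ d := by omega
  -- key : 2^t * d^d ≤ c^d
  have key : (2:ℝ)^t * (d:ℝ)^d ≤ (c:ℝ)^d := by
    have am := amgm_two (2*(d:ℝ)) (d:ℝ) (by positivity) (by positivity) htd (by omega)
    have e1 : (2*(d:ℝ))^t * (d:ℝ)^(d-t) * (d:ℝ)^d = ((2:ℝ)^t * (d:ℝ)^d) * (d:ℝ)^d := by
      rw [mul_pow]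
      have : (d:ℝ)^t * (d:ℝ)^(d-t) = (d:ℝ)^d := by
        rw [← pow_add]
        congr 1
        omega
      calc (2:ℝ)^t * (d:ℝ)^t * (d:ℝ)^(d-t) * (d:ℝ)^d
          = (2:ℝ)^t * ((d:ℝ)^t * (d:ℝ)^(d-t)) * (d:ℝ)^d := by ring
        _ = _ := by rw [this]
    have e2 : ((t:ℝ)*(2*(d:ℝ)) + ((d-t:ℕ):ℝ)*(d:ℝ))^d = ((d:ℝ)*(c:ℝ))^d := by
      congr 1
      rw [Nat.cast_sub htd]
      have : (c:ℝ) = (d:ℝ) + (t:ℝ) := by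
        rw [ht]
        push_cast [Nat.cast_sub hdc]
        ring
      rw [this]
      ring
    rw [e1, e2] at am
    have hdpos : (0:ℝ) < (d:ℝ)^d := by positivity
    have := le_of_mul_le_mul_right (by calc ((2:ℝ)^t * (d:ℝ)^d) * (d:ℝ)^d ≤ ((d:ℝ)*(c:ℝ))^d := am
      _ = (c:ℝ)^d * (d:ℝ)^d := by rw [mul_pow]; ring) hdpos
    exact this
  -- main chain
  have hk0 : (0:ℝ) < (k:ℝ) := by exact_mod_cast hk1
  have hkpow : (0:ℝ) < (k:ℝ)^d := by positivity
  rw [← pow_mul]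
  have goal_iff : (2:ℝ)^c * (2*(m:ℝ)-1)^(k*m) * (k:ℝ)^d ≤ ((4*c:ℝ)/k)^(k*m) * (k:ℝ)^d →
      (2:ℝ)^c * (2*(m:ℝ)-1)^(k*m) ≤ ((4*c:ℝ)/k)^(k*m) :=
    fun h => le_of_mul_le_mul_right h hkpow
  apply goal_iff
  have hrhs : ((4*c:ℝ)/k)^(k*m) * (k:ℝ)^d = (4*(c:ℝ))^d := by
    rw [← hdd, div_pow]
    field_simp
  rw [hrhs]
  have hlhs : (2:ℝ)^c * (2*(m:ℝ)-1)^(k*m) * (k:ℝ)^d = (2:ℝ)^c * ((2*(m:ℝ)-1)*(k:ℝ))^d := by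
    rw [← hdd, mul_pow]
    ring
  rw [hlhs]
  have hbase : (0:ℝ) ≤ (2*(m:ℝ)-1)*(k:ℝ) := by
    have : (1:ℝ) ≤ (m:ℝ) := by exact_mod_cast hm1
    nlinarith
  have hbd : (2*(m:ℝ)-1)*(k:ℝ) ≤ 2*(d:ℝ) := by
    have hdr : (d:ℝ) = (k:ℝ)*(m:ℝ) := by rw [hdd]; push_cast; ring
    nlinarith
  calc (2:ℝ)^c * ((2*(m:ℝ)-1)*(k:ℝ))^d
      ≤ (2:ℝ)^c * (2*(d:ℝ))^d := by
        apply mul_le_mul_of_nonneg_left (pow_le_pow_left₀ hbase hbd d) (by positivity)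
    _ = (4:ℝ)^d * ((2:ℝ)^t * (d:ℝ)^d) := by
        have hc : c = d + t := by omega
        have h4 : (4:ℝ)^d = (2:ℝ)^d * (2:ℝ)^d := by
          rw [show (4:ℝ) = 2*2 by norm_num, mul_pow]
        rw [hc, pow_add, mul_pow, h4]
        ring
    _ ≤ (4:ℝ)^d * (c:ℝ)^d := by
        apply mul_le_mul_of_nonneg_left key (by positivity)
    _ = (4*(c:ℝ))^d := by rw [mul_pow]

def sgn (z : ZMod 2) : ℝ := if z = 1 then -1 else 1

lemma sgn_cases (z : ZMod 2) : z = 0 ∨ z = 1 := by revert z; decide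

lemma sgn_sq (z : ZMod 2) : sgn z * sgn z = 1 := by
  rcases sgn_cases z with h | h <;> simp [sgn, h]

lemma sgn_add_one (z : ZMod 2) : sgn (z+1) = - sgn z := by
  rcases sgn_cases z with h | h <;> subst h <;>
    simp [sgn, show ((0:ZMod 2)+1) = 1 from rfl, show ((1:ZMod 2)+1) = 0 from rfl]

variable {ι : Type} [Fintype ι] [DecidableEq ι]

def w (Q : Finset ι) (y : ι → ZMod 2) : ℝ := ∏ i ∈ Q, sgn (y i)

/-- Hypercontractive inequality (induction over coordinates), in the
many-functions form. -/
lemma hc (m : ℕ) (hm : 1 ≤ m) (s : Finset ι) :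
    ∀ (J : Type) [Fintype J] (cf : J → ℝ), (∀ j, 0 ≤ cf j) → ∀ (a : J → Finset ι → ℝ),
    ∑ y : ι → ZMod 2, (∑ j, cf j * (∑ Q ∈ s.powerset, a j Q * w Q y)^2)^m
      ≤ (Fintype.card (ι → ZMod 2) : ℝ) *
        (∑ j, cf j * ∑ Q ∈ s.powerset, (2*(m:ℝ)-1)^Q.card * (a j Q)^2)^m := by
  induction s using Finset.induction_on with
  | empty =>
    intro J _ cf hcf a
    simp only [Finset.powerset_empty, Finset.sum_singleton, w, Finset.prod_empty,
      Finset.card_empty, pow_zero, mul_one, one_mul]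
    rw [Finset.sum_const, nsmul_eq_mul, Finset.card_univ]
  | @insert i s' hi ih =>
    intro J _ cf hcf a
    set lam : ℝ := 2*(m:ℝ)-1 with hlam_def
    have hm' : (1:ℝ) ≤ (m:ℝ) := by exact_mod_cast hm
    have hlam1 : (1:ℝ) ≤ lam := by rw [hlam_def]; linarith
    have hlam0 : (0:ℝ) ≤ lam := by linarith
    -- the two halves
    set F : J → (ι → ZMod 2) → ℝ := fun j y => ∑ Q ∈ s'.powerset, a j Q * w Q y with hF
    set G : J → (ι → ZMod 2) → ℝ := fun j y => ∑ Q ∈ s'.powerset, a j (insert i Q) * w Q y with hG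
    have hdisj : Disjoint s'.powerset (s'.powerset.image (insert i)) := by
      rw [Finset.disjoint_left]
      intro Q hQ hQ'
      obtain ⟨R, hR, rfl⟩ := Finset.mem_image.mp hQ'
      exact hi (Finset.mem_powerset.mp hQ (Finset.mem_insert_self i R))
    have hinj : ∀ R ∈ s'.powerset, ∀ R' ∈ s'.powerset, insert i R = insert i R' → R = R' := by
      intro R hR R' hR' h
      have hiR : i ∉ R := fun hc => hi (Finset.mem_powerset.mp hR hc)
      have hiR' : i ∉ R' := fun hc => hi (Finset.mem_powerset.mp hR' hc)
      rw [← Finset.erase_insert hiR, ← Finset.erase_insert hiR', h]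
    have w_insert : ∀ (R : Finset ι) (y : ι → ZMod 2), R ⊆ s' →
        w (insert i R) y = sgn (y i) * w R y := by
      intro R y hR
      exact Finset.prod_insert (fun hc => hi (hR hc))
    have decomp : ∀ j y, ∑ Q ∈ (insert i s').powerset, a j Q * w Q y
        = F j y + sgn (y i) * G j y := by
      intro j y
      rw [Finset.powerset_insert, Finset.sum_union hdisj, Finset.sum_image hinj]
      congr 1
      rw [Finset.mul_sum]
      refine Finset.sum_congr rfl fun R hR => ?_
      rw [w_insert R y (Finset.mem_powerset.mp hR)]
      ring
    have alpha_decomp : ∀ j, ∑ Q ∈ (insert i s').powerset, lam^Q.card * (a j Q)^2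
        = (∑ Q ∈ s'.powerset, lam^Q.card * (a j Q)^2)
          + lam * ∑ Q ∈ s'.powerset, lam^Q.card * (a j (insert i Q))^2 := by
      intro j
      rw [Finset.powerset_insert, Finset.sum_union hdisj, Finset.sum_image hinj]
      congr 1
      rw [Finset.mul_sum]
      refine Finset.sum_congr rfl fun R hR => ?_
      rw [Finset.card_insert_of_notMem (fun hc => hi (Finset.mem_powerset.mp hR hc)), pow_succ]
      ring
    -- the involution
    set τ : (ι → ZMod 2) → (ι → ZMod 2) := fun y => Function.update y i (y i + 1) with hτdef
    have hzz : ∀ z : ZMod 2, z + 1 + 1 = z := by decide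
    have hτinv : Function.Involutive τ := by
      intro y
      funext p
      by_cases hp : p = i
      · subst hp
        simp [hτdef, Function.update_self, hzz]
      · simp [hτdef, Function.update_of_ne hp]
    have hFτ : ∀ j y, F j (τ y) = F j y := by
      intro j y
      refine Finset.sum_congr rfl fun Q hQ => ?_
      congr 1
      refine Finset.prod_congr rfl fun p hp => ?_
      have hpi : p ≠ i := fun hc => hi (Finset.mem_powerset.mp hQ (hc ▸ hp))
      rw [hτdef]
      simp [Function.update_of_ne hpi]
    have hGτ : ∀ j y, G j (τ y) = G j y := by
      intro j y
      refine Finset.sum_congr rfl fun Q hQ => ?_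
      congr 1
      refine Finset.prod_congr rfl fun p hp => ?_
      have hpi : p ≠ i := fun hc => hi (Finset.mem_powerset.mp hQ (hc ▸ hp))
      rw [hτdef]
      simp [Function.update_of_ne hpi]
    have hsgnτ : ∀ y, sgn ((τ y) i) = - sgn (y i) := by
      intro y
      rw [hτdef]
      simp only [Function.update_self]
      exact sgn_add_one _
    -- U, V, Y
    set U : (ι → ZMod 2) → ℝ := fun y => ∑ j, cf j * (F j y)^2 with hU
    set V : (ι → ZMod 2) → ℝ := fun y => ∑ j, cf j * (G j y)^2 with hV
    set Yv : (ι → ZMod 2) → ℝ := fun y => ∑ j, 2 * cf j * F j y * G j y with hYv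
    have hU0 : ∀ y, 0 ≤ U y := fun y =>
      Finset.sum_nonneg fun j _ => mul_nonneg (hcf j) (sq_nonneg _)
    have hV0 : ∀ y, 0 ≤ V y := fun y =>
      Finset.sum_nonneg fun j _ => mul_nonneg (hcf j) (sq_nonneg _)
    have sum_exp : ∀ y, (∑ j, cf j * (∑ Q ∈ (insert i s').powerset, a j Q * w Q y)^2)
        = U y + V y + sgn (y i) * Yv y := by
      intro y
      have : ∀ j, cf j * (∑ Q ∈ (insert i s').powerset, a j Q * w Q y)^2
          = cf j * (F j y)^2 + cf j * (G j y)^2 + sgn (y i) * (2 * cf j * F j y * G j y) := by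
        intro j
        rw [decomp j y]
        linear_combination cf j * (G j y)^2 * sgn_sq (y i)
      rw [Finset.sum_congr rfl (fun j _ => this j)]
      rw [Finset.sum_add_distrib, Finset.sum_add_distrib, ← Finset.mul_sum]
    have hCS : ∀ y, (Yv y)^2 ≤ 4*(U y * V y) := by
      intro y
      have h1 : Yv y = 2 * ∑ j, (Real.sqrt (cf j) * F j y) * (Real.sqrt (cf j) * G j y) := by
        rw [hYv, Finset.mul_sum]
        refine Finset.sum_congr rfl fun j _ => ?_
        have hs : Real.sqrt (cf j) * Real.sqrt (cf j) = cf j := Real.mul_self_sqrt (hcf j)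
        linear_combination (-2 : ℝ) * F j y * G j y * hs
      have h2 := Finset.sum_mul_sq_le_sq_mul_sq Finset.univ
        (fun j => Real.sqrt (cf j) * F j y) (fun j => Real.sqrt (cf j) * G j y)
      have h3 : ∀ j, (Real.sqrt (cf j) * F j y)^2 = cf j * (F j y)^2 := by
        intro j
        rw [mul_pow, Real.sq_sqrt (hcf j)]
      have h4 : ∀ j, (Real.sqrt (cf j) * G j y)^2 = cf j * (G j y)^2 := by
        intro j
        rw [mul_pow, Real.sq_sqrt (hcf j)]
      rw [Finset.sum_congr rfl (fun j _ => h3 j), Finset.sum_congr rfl (fun j _ => h4 j)] at h2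
      rw [h1]
      calc (2 * ∑ j, (Real.sqrt (cf j) * F j y) * (Real.sqrt (cf j) * G j y))^2
          = 4 * (∑ j, (Real.sqrt (cf j) * F j y) * (Real.sqrt (cf j) * G j y))^2 := by ring
        _ ≤ 4 * (U y * V y) := by
            apply mul_le_mul_of_nonneg_left _ (by norm_num)
            exact h2
    -- pointwise pairing bound
    have pairbd : ∀ y, (∑ j, cf j * (∑ Q ∈ (insert i s').powerset, a j Q * w Q y)^2)^m
        + (∑ j, cf j * (∑ Q ∈ (insert i s').powerset, a j Q * w Q (τ y))^2)^m
        ≤ 2*(U y + lam * V y)^m := by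
      intro y
      have e1 := sum_exp y
      have e2 : (∑ j, cf j * (∑ Q ∈ (insert i s').powerset, a j Q * w Q (τ y))^2)
          = U y + V y - sgn (y i) * Yv y := by
        have := sum_exp (τ y)
        rw [this]
        have hUτ : U (τ y) = U y := by
          rw [hU]; exact Finset.sum_congr rfl fun j _ => by rw [hFτ]
        have hVτ : V (τ y) = V y := by
          rw [hV]; exact Finset.sum_congr rfl fun j _ => by rw [hGτ]
        have hYτ : Yv (τ y) = Yv y := by
          rw [hYv]; exact Finset.sum_congr rfl fun j _ => by rw [hFτ, hGτ]
        rw [hUτ, hVτ, hYτ, hsgnτ]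
        ring
      rw [e1, e2]
      have hY2 : (sgn (y i) * Yv y)^2 ≤ 4*(U y * V y) := by
        have : (sgn (y i) * Yv y)^2 = (Yv y)^2 := by
          have := sgn_sq (y i)
          nlinarith [this]
        rw [this]
        exact hCS y
      have := twopoint m (U y) (V y) (sgn (y i) * Yv y) (hU0 y) (hV0 y) hY2
      convert this using 3 <;> ring
    -- sum over y using the involution
    have hsum_inv : ∑ y : ι → ZMod 2, (∑ j, cf j * (∑ Q ∈ (insert i s').powerset, a j Q * w Q (τ y))^2)^m
        = ∑ y : ι → ZMod 2, (∑ j, cf j * (∑ Q ∈ (insert i s').powerset, a j Q * w Q y)^2)^m := by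
      exact Function.Bijective.sum_comp hτinv.bijective
        (fun z => (∑ j, cf j * (∑ Q ∈ (insert i s').powerset, a j Q * w Q z)^2)^m)
    have main1 : ∑ y : ι → ZMod 2, (∑ j, cf j * (∑ Q ∈ (insert i s').powerset, a j Q * w Q y)^2)^m
        ≤ ∑ y : ι → ZMod 2, (U y + lam * V y)^m := by
      have h2 : (2:ℝ) * ∑ y : ι → ZMod 2, (∑ j, cf j * (∑ Q ∈ (insert i s').powerset, a j Q * w Q y)^2)^m
          ≤ 2 * ∑ y : ι → ZMod 2, (U y + lam * V y)^m := by
        calc (2:ℝ) * ∑ y : ι → ZMod 2, (∑ j, cf j * (∑ Q ∈ (insert i s').powerset, a j Q * w Q y)^2)^m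
            = ∑ y : ι → ZMod 2, ((∑ j, cf j * (∑ Q ∈ (insert i s').powerset, a j Q * w Q y)^2)^m
              + (∑ j, cf j * (∑ Q ∈ (insert i s').powerset, a j Q * w Q (τ y))^2)^m) := by
              rw [Finset.sum_add_distrib, hsum_inv]
              ring
          _ ≤ ∑ y : ι → ZMod 2, 2*(U y + lam * V y)^m := Finset.sum_le_sum fun y _ => pairbd y
          _ = 2 * ∑ y : ι → ZMod 2, (U y + lam * V y)^m := by rw [← Finset.mul_sum]
      linarith
    -- apply IH with doubled family
    set cf' : J × Bool → ℝ := fun jb => cond jb.2 (lam * cf jb.1) (cf jb.1) with hcf'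
    set a' : J × Bool → Finset ι → ℝ :=
      fun jb Q => cond jb.2 (a jb.1 (insert i Q)) (a jb.1 Q) with ha'
    have hcf'0 : ∀ jb, 0 ≤ cf' jb := by
      rintro ⟨j, b⟩
      cases b
      · simpa [hcf'] using hcf j
      · simpa [hcf'] using mul_nonneg hlam0 (hcf j)
    have IH := ih (J × Bool) cf' hcf'0 a'
    have base_eq : ∀ y, (∑ jb : J × Bool, cf' jb * (∑ Q ∈ s'.powerset, a' jb Q * w Q y)^2)
        = U y + lam * V y := by
      intro y
      rw [Fintype.sum_prod_type]
      have : ∀ j, ∑ b : Bool, cf' (j, b) * (∑ Q ∈ s'.powerset, a' (j, b) Q * w Q y)^2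
          = cf j * (F j y)^2 + lam * (cf j * (G j y)^2) := by
        intro j
        rw [Fintype.sum_bool]
        simp only [hcf', ha', cond_true, cond_false, hF, hG]
        ring
      rw [Finset.sum_congr rfl (fun j _ => this j), Finset.sum_add_distrib, ← Finset.mul_sum,
        hU, hV]
    have alpha_eq : (∑ jb : J × Bool, cf' jb * ∑ Q ∈ s'.powerset, lam^Q.card * (a' jb Q)^2)
        = ∑ j, cf j * ∑ Q ∈ (insert i s').powerset, lam^Q.card * (a j Q)^2 := by
      rw [Fintype.sum_prod_type]
      refine Finset.sum_congr rfl fun j _ => ?_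
      rw [Fintype.sum_bool, alpha_decomp j]
      simp only [hcf', ha', cond_true, cond_false]
      ring
    calc ∑ y : ι → ZMod 2, (∑ j, cf j * (∑ Q ∈ (insert i s').powerset, a j Q * w Q y)^2)^m
        ≤ ∑ y : ι → ZMod 2, (U y + lam * V y)^m := main1
      _ = ∑ y : ι → ZMod 2, (∑ jb : J × Bool, cf' jb * (∑ Q ∈ s'.powerset, a' jb Q * w Q y)^2)^m := by
          exact Finset.sum_congr rfl fun y _ => by rw [base_eq y]
      _ ≤ (Fintype.card (ι → ZMod 2) : ℝ) *
          (∑ jb : J × Bool, cf' jb * ∑ Q ∈ s'.powerset, lam^Q.card * (a' jb Q)^2)^m := IH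
      _ = (Fintype.card (ι → ZMod 2) : ℝ) *
          (∑ j, cf j * ∑ Q ∈ (insert i s').powerset, lam^Q.card * (a j Q)^2)^m := by
          rw [alpha_eq]

lemma core {n c k : ℕ} (hc1 : 0 < c) (hk1 : 1 ≤ k) (hkc : k ≤ c)
    (A : Finset (Fin n → Bool)) (hA0 : 0 < A.card) (hA : (2:ℝ)^n ≤ A.card * 2^c)
    {ι : Type} [Fintype ι] [DecidableEq ι] (Φ : (Fin n → Bool) → ι → ZMod 2)
    (hfib : ∀ y : ι → ZMod 2,
      (Finset.univ.filter (fun x => Φ x = y)).card * 2^(Fintype.card ι) ≤ 2^n)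
    (𝒬 : Finset (Finset ι)) (hQk : ∀ Q ∈ 𝒬, Q.card = k) :
    ∑ Q ∈ 𝒬, ((1 / (A.card:ℝ)) * ∑ x ∈ A, w Q (Φ x))^2 ≤ ((4*c:ℝ)/k)^k := by
  obtain ⟨m, hm1, harith⟩ := arith c k hk1 hkc
  set M := Fintype.card ι with hM
  set N : ℝ := (A.card : ℝ) with hNdef
  have hN : (0:ℝ) < N := by rw [hNdef]; exact_mod_cast hA0
  set ah : Finset ι → ℝ := fun Q => (1 / N) * ∑ x ∈ A, w Q (Φ x) with hah
  set W : ℝ := ∑ Q ∈ 𝒬, (ah Q)^2 with hW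
  have hW0 : 0 ≤ W := Finset.sum_nonneg fun Q _ => sq_nonneg _
  set lam : ℝ := 2*(m:ℝ)-1 with hlam
  have hm' : (1:ℝ) ≤ (m:ℝ) := by exact_mod_cast hm1
  have hlam0 : (0:ℝ) ≤ lam := by rw [hlam]; linarith
  set h : (ι → ZMod 2) → ℝ := fun y => ∑ Q ∈ 𝒬, ah Q * w Q y with hh
  -- step 1
  have step1 : ∑ x ∈ A, h (Φ x) = N * W := by
    rw [hh]
    simp only
    rw [Finset.sum_comm]
    rw [hW, Finset.mul_sum]
    refine Finset.sum_congr rfl fun Q _ => ?_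
    have : ∑ x ∈ A, w Q (Φ x) = N * ah Q := by
      rw [hah]
      field_simp
    rw [← Finset.mul_sum, this]
    ring
  -- step 2 : Jensen with uniform weights
  have step2 : (∑ x ∈ A, h (Φ x))^(2*m) ≤ N^(2*m-1) * ∑ x ∈ A, (h (Φ x))^(2*m) := by
    have habs : |∑ x ∈ A, h (Φ x)| ≤ ∑ x ∈ A, |h (Φ x)| := Finset.abs_sum_le_sum_abs _ _
    have heven : Even (2*m) := even_two_mul m
    have e1 : (∑ x ∈ A, h (Φ x))^(2*m) = |∑ x ∈ A, h (Φ x)|^(2*m) := (heven.pow_abs _).symm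
    have e2 : |∑ x ∈ A, h (Φ x)|^(2*m) ≤ (∑ x ∈ A, |h (Φ x)|)^(2*m) :=
      pow_le_pow_left₀ (abs_nonneg _) habs _
    have key := pow_sum_div_card_le_sum_pow (s := A) (f := fun x => |h (Φ x)|)
      (fun x _ => abs_nonneg _) (2*m-1)
    have hexp : 2*m-1+1 = 2*m := by omega
    rw [hexp, ← hNdef] at key
    have e3 : ∑ x ∈ A, |h (Φ x)|^(2*m) = ∑ x ∈ A, (h (Φ x))^(2*m) :=
      Finset.sum_congr rfl fun x _ => heven.pow_abs _
    have hNpow : (0:ℝ) < N^(2*m-1) := by positivity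
    have key' : (∑ x ∈ A, |h (Φ x)|)^(2*m) ≤ (∑ x ∈ A, |h (Φ x)|^(2*m)) * N^(2*m-1) :=
      (div_le_iff₀ hNpow).mp key
    calc (∑ x ∈ A, h (Φ x))^(2*m) ≤ (∑ x ∈ A, |h (Φ x)|)^(2*m) := by rw [e1]; exact e2
      _ ≤ (∑ x ∈ A, |h (Φ x)|^(2*m)) * N^(2*m-1) := key'
      _ = N^(2*m-1) * ∑ x ∈ A, (h (Φ x))^(2*m) := by rw [e3]; ring
  -- step 3 : fibers
  have step3 : (2:ℝ)^M * ∑ x ∈ A, (h (Φ x))^(2*m)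
      ≤ (2:ℝ)^n * ∑ y : ι → ZMod 2, (h y)^(2*m) := by
    have h1 : ∑ x ∈ A, (h (Φ x))^(2*m) ≤ ∑ x : Fin n → Bool, (h (Φ x))^(2*m) := by
      apply Finset.sum_le_sum_of_subset_of_nonneg (Finset.subset_univ A)
      intro x _ _
      have : (h (Φ x))^(2*m) = ((h (Φ x))^m)^2 := by rw [← pow_mul]; ring_nf
      rw [this]
      exact sq_nonneg _
    have h2 : ∑ x : Fin n → Bool, (h (Φ x))^(2*m)
        = ∑ y ∈ Finset.univ.image Φ,
            ((Finset.univ.filter (fun x => Φ x = y)).card : ℝ) * (h y)^(2*m) := by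
      rw [Finset.sum_comp (fun y => (h y)^(2*m)) Φ]
      refine Finset.sum_congr rfl fun y _ => ?_
      rw [nsmul_eq_mul]
    have h3 : ∑ y ∈ Finset.univ.image Φ,
          ((Finset.univ.filter (fun x => Φ x = y)).card : ℝ) * (h y)^(2*m)
        = ∑ y : ι → ZMod 2,
            ((Finset.univ.filter (fun x => Φ x = y)).card : ℝ) * (h y)^(2*m) := by
      apply Finset.sum_subset (Finset.subset_univ _)
      intro y _ hy
      have : (Finset.univ.filter (fun x => Φ x = y)) = ∅ := by
        rw [Finset.filter_eq_empty_iff]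
        intro x _
        intro hxy
        exact hy (Finset.mem_image.mpr ⟨x, Finset.mem_univ x, hxy⟩)
      rw [this]
      simp
    have h4 : ∀ y : ι → ZMod 2,
        (2:ℝ)^M * (((Finset.univ.filter (fun x => Φ x = y)).card : ℝ) * (h y)^(2*m))
          ≤ (2:ℝ)^n * (h y)^(2*m) := by
      intro y
      have hcast : (((Finset.univ.filter (fun x => Φ x = y)).card : ℝ)) * (2:ℝ)^M ≤ (2:ℝ)^n := by
        have := hfib y
        exact_mod_cast this
      have hpow : (0:ℝ) ≤ (h y)^(2*m) := by
        have : (h y)^(2*m) = ((h y)^m)^2 := by rw [← pow_mul]; ring_nf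
        rw [this]
        exact sq_nonneg _
      calc (2:ℝ)^M * (((Finset.univ.filter (fun x => Φ x = y)).card : ℝ) * (h y)^(2*m))
          = (((Finset.univ.filter (fun x => Φ x = y)).card : ℝ) * (2:ℝ)^M) * (h y)^(2*m) := by
            ring
        _ ≤ (2:ℝ)^n * (h y)^(2*m) := mul_le_mul_of_nonneg_right hcast hpow
    calc (2:ℝ)^M * ∑ x ∈ A, (h (Φ x))^(2*m)
        ≤ (2:ℝ)^M * ∑ y : ι → ZMod 2,
            ((Finset.univ.filter (fun x => Φ x = y)).card : ℝ) * (h y)^(2*m) := by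
          apply mul_le_mul_of_nonneg_left _ (by positivity)
          rw [← h3, ← h2]
          exact h1
      _ = ∑ y : ι → ZMod 2, (2:ℝ)^M *
            (((Finset.univ.filter (fun x => Φ x = y)).card : ℝ) * (h y)^(2*m)) := by
          rw [Finset.mul_sum]
      _ ≤ ∑ y : ι → ZMod 2, (2:ℝ)^n * (h y)^(2*m) := Finset.sum_le_sum fun y _ => h4 y
      _ = (2:ℝ)^n * ∑ y : ι → ZMod 2, (h y)^(2*m) := by rw [← Finset.mul_sum]
  -- step 4 : hypercontractivity
  have step4 : ∑ y : ι → ZMod 2, (h y)^(2*m) ≤ (2:ℝ)^M * (lam^k * W)^m := by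
    have hcardfun : (Fintype.card (ι → ZMod 2) : ℝ) = (2:ℝ)^M := by
      rw [Fintype.card_fun, ZMod.card 2]
      push_cast
      rfl
    have key := hc m hm1 (Finset.univ : Finset ι) Unit (fun _ => (1:ℝ)) (fun _ => zero_le_one)
      (fun _ Q => if Q ∈ 𝒬 then ah Q else 0)
    have hsub : 𝒬 ⊆ (Finset.univ : Finset ι).powerset := fun Q _ =>
      Finset.mem_powerset.mpr (Finset.subset_univ Q)
    have hbase : ∀ y, ∑ Q ∈ (Finset.univ : Finset ι).powerset,
        (if Q ∈ 𝒬 then ah Q else 0) * w Q y = h y := by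
      intro y
      have e : ∀ Q : Finset ι, (if Q ∈ 𝒬 then ah Q else 0) * w Q y
          = if Q ∈ 𝒬 then ah Q * w Q y else 0 := by
        intro Q; split <;> simp
      rw [Finset.sum_congr rfl (fun Q _ => e Q), Finset.sum_ite_mem,
        Finset.inter_eq_right.mpr hsub]
    have halpha : ∑ Q ∈ (Finset.univ : Finset ι).powerset,
        lam^Q.card * (if Q ∈ 𝒬 then ah Q else 0)^2 = lam^k * W := by
      have e : ∀ Q : Finset ι, lam^Q.card * (if Q ∈ 𝒬 then ah Q else 0)^2
          = if Q ∈ 𝒬 then lam^Q.card * (ah Q)^2 else 0 := by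
        intro Q; split <;> simp
      rw [Finset.sum_congr rfl (fun Q _ => e Q), Finset.sum_ite_mem,
        Finset.inter_eq_right.mpr hsub, hW, Finset.mul_sum]
      refine Finset.sum_congr rfl fun Q hQ => ?_
      rw [hQk Q hQ]
    simp only [Finset.univ_unique, Finset.sum_singleton, one_mul] at key
    rw [hcardfun] at key
    calc ∑ y : ι → ZMod 2, (h y)^(2*m)
        = ∑ y : ι → ZMod 2, ((∑ Q ∈ (Finset.univ : Finset ι).powerset,
            (if Q ∈ 𝒬 then ah Q else 0) * w Q y)^2)^m := by
          refine Finset.sum_congr rfl fun y _ => ?_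
          rw [hbase y, ← pow_mul]
      _ ≤ (2:ℝ)^M * (∑ Q ∈ (Finset.univ : Finset ι).powerset,
            lam^Q.card * (if Q ∈ 𝒬 then ah Q else 0)^2)^m := key
      _ = (2:ℝ)^M * (lam^k * W)^m := by rw [halpha]
  -- combine everything
  have hT0 : (0:ℝ) ≤ (lam^k * W)^m := pow_nonneg (mul_nonneg (pow_nonneg hlam0 k) hW0) m
  have hAsum : ∑ x ∈ A, (h (Φ x))^(2*m) ≤ (2:ℝ)^n * (lam^k * W)^m := by
    have h2M : (0:ℝ) < (2:ℝ)^M := by positivity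
    have h' : (2:ℝ)^M * ∑ x ∈ A, (h (Φ x))^(2*m)
        ≤ (2:ℝ)^M * ((2:ℝ)^n * (lam^k * W)^m) := by
      calc (2:ℝ)^M * ∑ x ∈ A, (h (Φ x))^(2*m)
          ≤ (2:ℝ)^n * ∑ y : ι → ZMod 2, (h y)^(2*m) := step3
        _ ≤ (2:ℝ)^n * ((2:ℝ)^M * (lam^k * W)^m) :=
            mul_le_mul_of_nonneg_left step4 (by positivity)
        _ = (2:ℝ)^M * ((2:ℝ)^n * (lam^k * W)^m) := by ring
    exact le_of_mul_le_mul_left h' h2M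
  have main : W^(2*m) ≤ (2:ℝ)^c * (lam^k * W)^m := by
    have hNpow : (0:ℝ) < N^(2*m-1) := by positivity
    have c1 : (N*W)^(2*m) ≤ N^(2*m-1) * ((2:ℝ)^n * (lam^k * W)^m) := by
      calc (N*W)^(2*m) = (∑ x ∈ A, h (Φ x))^(2*m) := by rw [step1]
        _ ≤ N^(2*m-1) * ∑ x ∈ A, (h (Φ x))^(2*m) := step2
        _ ≤ N^(2*m-1) * ((2:ℝ)^n * (lam^k * W)^m) :=
            mul_le_mul_of_nonneg_left hAsum (le_of_lt hNpow)
    have c2 : (N*W)^(2*m) = N^(2*m-1) * (N * W^(2*m)) := by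
      rw [mul_pow]
      have : N^(2*m) = N^(2*m-1) * N := by
        rw [← pow_succ]
        congr 1
        omega
      rw [this]
      ring
    have c3 : N * W^(2*m) ≤ (2:ℝ)^n * (lam^k * W)^m := by
      rw [c2] at c1
      exact le_of_mul_le_mul_left c1 hNpow
    have c4 : (2:ℝ)^n * (lam^k * W)^m ≤ (N * (2:ℝ)^c) * (lam^k * W)^m :=
      mul_le_mul_of_nonneg_right hA hT0
    have c5 : N * W^(2*m) ≤ N * ((2:ℝ)^c * (lam^k * W)^m) := by
      calc N * W^(2*m) ≤ (N * (2:ℝ)^c) * (lam^k * W)^m := c3.trans c4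
        _ = N * ((2:ℝ)^c * (lam^k * W)^m) := by ring
    exact le_of_mul_le_mul_left c5 hN
  have hRHS0 : (0:ℝ) ≤ ((4*c:ℝ)/k)^k := by
    apply pow_nonneg
    apply div_nonneg <;> positivity
  show W ≤ ((4*c:ℝ)/k)^k
  rcases eq_or_lt_of_le hW0 with hWz | hWpos
  · rw [← hWz]
    exact hRHS0
  · have hWm : (0:ℝ) < W^m := pow_pos hWpos m
    have d1 : W^m * W^m ≤ ((2:ℝ)^c * lam^(k*m)) * W^m := by
      calc W^m * W^m = W^(2*m) := by rw [← pow_add]; congr 1; omega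
        _ ≤ (2:ℝ)^c * (lam^k * W)^m := main
        _ = ((2:ℝ)^c * lam^(k*m)) * W^m := by rw [mul_pow, ← pow_mul]; ring
    have d2 : W^m ≤ (2:ℝ)^c * lam^(k*m) := le_of_mul_le_mul_right d1 hWm
    have d3 : W^m ≤ (((4*c:ℝ)/k)^k)^m := d2.trans harith
    exact le_of_pow_le_pow_left₀ (by omega) hRHS0 d3

/-- The parity map. -/
def phi {n : ℕ} (P : Finset (Finset (Fin n))) (x : Fin n → Bool) (p : {p // p ∈ P}) : ZMod 2 :=
  ∑ i ∈ p.val, (if x i then (1:ZMod 2) else 0)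

lemma sgn_natCast : ∀ t : ℕ, sgn ((t:ℕ) : ZMod 2) = (-1:ℝ)^t := by
  intro t
  induction t with
  | zero => simp [sgn]
  | succ t ih =>
    have : ((t+1 : ℕ) : ZMod 2) = ((t:ℕ) : ZMod 2) + 1 := by push_cast; ring
    rw [this, sgn_add_one, ih, pow_succ]
    ring

lemma phi_card {n : ℕ} (P : Finset (Finset (Fin n))) (x : Fin n → Bool) (p : {p // p ∈ P}) :
    phi P x p = (((p.val.filter (fun i => x i = true)).card : ℕ) : ZMod 2) := by
  rw [phi]
  rw [Finset.sum_boole]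

lemma phi_add {n : ℕ} (P : Finset (Finset (Fin n))) (x z : Fin n → Bool) :
    phi P (fun i => xor (x i) (z i)) = phi P x + phi P z := by
  funext p
  have e : ∀ i, (if xor (x i) (z i) then (1:ZMod 2) else 0)
      = (if x i then (1:ZMod 2) else 0) + (if z i then (1:ZMod 2) else 0) := by
    intro i
    cases hx : x i <;> cases hz : z i <;> simp <;> decide
  show (∑ i ∈ p.val, if xor (x i) (z i) then (1:ZMod 2) else 0) = phi P x p + phi P z p
  rw [Finset.sum_congr rfl (fun i _ => e i), Finset.sum_add_distrib]
  rfl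

/-- Fiber bound for the parity map. -/
lemma fib_bound {n : ℕ} (P : Finset (Finset (Fin n)))
    (hPne : ∀ p ∈ P, p.Nonempty)
    (hPdisj : ∀ p ∈ P, ∀ q ∈ P, p ≠ q → Disjoint p q)
    (y : {p // p ∈ P} → ZMod 2) :
    (Finset.univ.filter (fun x : Fin n → Bool => phi P x = y)).card
      * 2^(Fintype.card {p // p ∈ P}) ≤ 2^n := by
  classical
  set rep : {p // p ∈ P} → Fin n := fun p => (hPne p.val p.prop).choose with hrepdef
  have hrep : ∀ p : {p // p ∈ P}, rep p ∈ p.val := fun p => (hPne p.val p.prop).choose_spec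
  have repinj : ∀ p q : {p // p ∈ P}, rep p = rep q → p = q := by
    intro p q h
    by_contra hne
    have hd := hPdisj p.val p.prop q.val q.prop (fun hv => hne (Subtype.ext hv))
    exact (Finset.disjoint_left.mp hd (hrep p)) (h ▸ hrep q)
  set sel : ({p // p ∈ P} → ZMod 2) → Fin n → Bool :=
    fun ε i => decide (∃ p : {p // p ∈ P}, ε p = 1 ∧ rep p = i) with hseldef
  have phi_sel : ∀ ε p, phi P (sel ε) p = ε p := by
    intro ε p
    rw [phi]
    rw [Finset.sum_eq_single (rep p)]
    · have hcase : ε p = 0 ∨ ε p = 1 := by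
        have : ∀ z : ZMod 2, z = 0 ∨ z = 1 := by decide
        exact this _
      rcases hcase with h | h
      · have hnot : ¬ (∃ q : {p // p ∈ P}, ε q = 1 ∧ rep q = rep p) := by
          rintro ⟨q, hq1, hq2⟩
          rw [repinj q p hq2] at hq1
          rw [h] at hq1
          exact absurd hq1 (by decide)
        have hd : sel ε (rep p) = false := decide_eq_false hnot
        rw [hd, h]
        simp
      · have hyes : (∃ q : {p // p ∈ P}, ε q = 1 ∧ rep q = rep p) := ⟨p, h, rfl⟩
        have hd : sel ε (rep p) = true := decide_eq_true hyes
        rw [hd, h]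
        simp
    · intro i hi hne
      have hnot : ¬ (∃ q : {p // p ∈ P}, ε q = 1 ∧ rep q = i) := by
        rintro ⟨q, hq1, hq2⟩
        have hiq : i ∈ q.val := hq2 ▸ hrep q
        have : q = p := by
          by_contra hqp
          have hd := hPdisj q.val q.prop p.val p.prop (fun hv => hqp (Subtype.ext hv))
          exact (Finset.disjoint_left.mp hd hiq) hi
        rw [this] at hq2
        exact hne hq2.symm
      have hd : sel ε i = false := decide_eq_false hnot
      rw [hd]
      simp
    · intro h
      exact absurd (hrep p) h
  -- injection
  have hinj : Set.InjOn
      (fun xe : (Fin n → Bool) × ({p // p ∈ P} → ZMod 2) =>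
        (fun i => xor (xe.1 i) (sel xe.2 i)))
      (((Finset.univ.filter (fun x : Fin n → Bool => phi P x = y)) ×ˢ
        (Finset.univ : Finset ({p // p ∈ P} → ZMod 2)) : Finset _) : Set _) := by
    rintro ⟨x, ε⟩ hmem ⟨x', ε'⟩ hmem' heq
    rw [Finset.mem_coe, Finset.mem_product] at hmem hmem'
    have hx : phi P x = y := (Finset.mem_filter.mp hmem.1).2
    have hx' : phi P x' = y := (Finset.mem_filter.mp hmem'.1).2
    have hphi : phi P (fun i => xor (x i) (sel ε i)) = phi P (fun i => xor (x' i) (sel ε' i)) := by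
      simp only at heq
      rw [heq]
    rw [phi_add, phi_add] at hphi
    have hsel_eq : (fun p => phi P (sel ε) p) = (fun p => phi P (sel ε') p) := by
      funext p
      have := congrFun hphi p
      simp only [Pi.add_apply] at this
      have h1 := congrFun hx p
      have h2 := congrFun hx' p
      rw [h1, h2] at this
      exact add_left_cancel this
    have hee : ε = ε' := by
      funext p
      have := congrFun hsel_eq p
      rwa [phi_sel, phi_sel] at this
    subst hee
    have hxx : x = x' := by
      funext i
      have := congrFun heq i
      simp only at this
      revert this
      cases x i <;> cases x' i <;> cases sel ε i <;> decide
    subst hxx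
    rfl
  have hcard := Finset.card_le_card_of_injOn _ (fun _ _ => Finset.mem_univ _) hinj
  rw [Finset.card_product] at hcard
  have h1 : (Finset.univ : Finset ({p // p ∈ P} → ZMod 2)).card
      = 2^(Fintype.card {p // p ∈ P}) := by
    rw [Finset.card_univ, Fintype.card_fun, ZMod.card 2]
  have h2 : (Finset.univ : Finset (Fin n → Bool)).card = 2^n := by
    rw [Finset.card_univ, Fintype.card_fun, Fintype.card_bool, Fintype.card_fin]
  rw [h1, h2] at hcard
  exact hcard

/-- Factorization of the character through the parity map. -/
lemma chi_eq {n : ℕ} (P : Finset (Finset (Fin n)))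
    (hPdisj : ∀ p ∈ P, ∀ q ∈ P, p ≠ q → Disjoint p q)
    (Q : Finset (Finset (Fin n))) (hQP : Q ⊆ P) (x : Fin n → Bool) :
    chi (fun i => decide (i ∈ Q.sup id)) x = w (Q.subtype (· ∈ P)) (phi P x) := by
  classical
  have stepA : (Finset.univ.filter
        (fun i => (fun i => decide (i ∈ Q.sup id)) i = true ∧ x i = true))
      = (Q.sup id).filter (fun i => x i = true) := by
    ext i
    simp [Finset.mem_filter]
  have stepB : ((Q.sup id).filter (fun i => x i = true)).card
      = ∑ p ∈ Q, (p.filter (fun i => x i = true)).card := by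
    rw [Finset.sup_eq_biUnion, Finset.filter_biUnion]
    exact Finset.card_biUnion fun p hp q hq hne =>
      Finset.disjoint_filter_filter (hPdisj p (hQP hp) q (hQP hq) hne)
  have stepE : chi (fun i => decide (i ∈ Q.sup id)) x
      = ∏ p ∈ Q, (-1:ℝ)^((p.filter (fun i => x i = true)).card) := by
    rw [chi, stepA, stepB]
    exact (Finset.prod_pow_eq_pow_sum Q _ _).symm
  rw [stepE]
  have stepG : w (Q.subtype (· ∈ P)) (phi P x)
      = ∏ p' ∈ Q.subtype (· ∈ P),
          (-1:ℝ)^(((p' : Finset (Fin n)).filter (fun i => x i = true)).card) := by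
    rw [w]
    refine Finset.prod_congr rfl fun p' _ => ?_
    rw [phi_card, sgn_natCast]
  rw [stepG]
  rw [Finset.prod_subtype_eq_prod_filter
    (fun p => (-1:ℝ)^((p.filter (fun i => x i = true)).card)) (p := (· ∈ P))]
  rw [Finset.filter_true_of_mem fun p hp => hQP hp]

end Stmt3Aux

/-- Lemma 4.21 (`lm:fouriercoeffs-paths`): if `|A| ≥ 2^{n-c}`, then for every
`1 ≤ k ≤ c`, every partition `P` of `[n]`, and every set `S` of indicator vectors of
unions of exactly `k` parts of `P`, `∑_{v ∈ S} f̃(v)² ≤ (4c/k)^k`. -/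
theorem stmt3 (n c : ℕ) (hn : 0 < n) (hc : 0 < c)
    (A : Finset (Fin n → Bool)) (hA : (2 : ℝ) ^ n ≤ A.card * 2 ^ c)
    (k : ℕ) (hk1 : 1 ≤ k) (hk2 : k ≤ c)
    (P : Finset (Finset (Fin n)))
    (hPne : ∀ p ∈ P, p.Nonempty)
    (hPdisj : ∀ p ∈ P, ∀ q ∈ P, p ≠ q → Disjoint p q)
    (hPcover : P.sup id = Finset.univ)
    (S : Finset (Fin n → Bool))
    (hS : ∀ v ∈ S, ∃ Q ⊆ P, Q.card = k ∧ v = fun i => decide (i ∈ Q.sup id)) :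
    ∑ v ∈ S, ftilde A v ^ 2 ≤ ((4 * c : ℝ) / k) ^ k := by
  classical
  have hA0 : 0 < A.card := by
    by_contra h
    push_neg at h
    have hz : A.card = 0 := by omega
    rw [hz] at hA
    norm_num at hA
    have : (0:ℝ) < 2^n := by positivity
    linarith
  choose Qf hQfP hQfk hQfv using hS
  set Θ : {v // v ∈ S} → Finset {p // p ∈ P} :=
    fun v => (Qf v.1 v.2).subtype (· ∈ P) with hΘ
  set 𝒬 : Finset (Finset {p // p ∈ P}) := S.attach.image Θ with h𝒬
  have hΘQf : ∀ v : {v // v ∈ S}, (Θ v).map (Function.Embedding.subtype (· ∈ P)) = Qf v.1 v.2 := by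
    intro v
    rw [hΘ]
    simp only
    rw [Finset.subtype_map]
    exact Finset.filter_true_of_mem fun p hp => hQfP v.1 v.2 hp
  have hΘinj : ∀ v ∈ S.attach, ∀ v' ∈ S.attach, Θ v = Θ v' → v = v' := by
    intro v _ v' _ h
    have hQ : Qf v.1 v.2 = Qf v'.1 v'.2 := by
      rw [← hΘQf v, ← hΘQf v', h]
    apply Subtype.ext
    rw [hQfv v.1 v.2, hQfv v'.1 v'.2, hQ]
  have hcardQ : ∀ z ∈ 𝒬, z.card = k := by
    intro z hz
    obtain ⟨v, _, rfl⟩ := Finset.mem_image.mp hz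
    rw [hΘ]
    simp only
    rw [Finset.card_subtype]
    rw [Finset.filter_true_of_mem fun p hp => hQfP v.1 v.2 hp]
    exact hQfk v.1 v.2
  have hfib := fun y => Stmt3Aux.fib_bound P hPne hPdisj y
  have key := Stmt3Aux.core hc hk1 hk2 A hA0 hA (Stmt3Aux.phi P) hfib 𝒬 hcardQ
  have hsum : ∑ v ∈ S, ftilde A v ^ 2
      = ∑ z ∈ 𝒬, ((1 / (A.card:ℝ)) * ∑ x ∈ A, Stmt3Aux.w z (Stmt3Aux.phi P x))^2 := by
    rw [h𝒬, Finset.sum_image hΘinj]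
    rw [← Finset.sum_attach S (fun v => ftilde A v ^ 2)]
    refine Finset.sum_congr rfl fun v _ => ?_
    congr 1
    rw [ftilde]
    congr 1
    refine Finset.sum_congr rfl fun x _ => ?_
    have := Stmt3Aux.chi_eq P hPdisj (Qf v.1 v.2) (hQfP v.1 v.2) x
    rw [hQfv v.1 v.2, this]
  rw [hsum]
  exact key
end
end
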